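/- arXiv:1911.02146 — 3 statements merged into one kernel-verified Lean document; each statement's English description precedes it below -/
import Mathlib

section
/- Let ε > 0 and let D_1,…,D_n be probability distributions on [0,H]. For each i, let D̃_i be D_i shifted right by ε (i.e., the distribution with CDF F_{D̃_i}(x) = F_{D_i}(x−ε)) and let D̰_i be D_i shifted left by ε (CDF F_{D̰_i}(x) = F_{D_i}(x+ε)). Then for every DSIC and IR single-item mechanism M there exists a DSIC and IR single-item mechanism M' such that Rev(M', ×_{i=1}^n D̰_i) ≥ Rev(M, ×_{i=1}^n D̃_i) − 2ε. In particular, OPT(×_i D̰_i) ≥ OPT(×_i D̃_i) − 2ε. -/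
open MeasureTheory Set

namespace SingleItem

/-- A single-item mechanism for `n` bidders: (expected) allocation probabilities and
(expected) payments on each bid profile. -/
structure Mech (n : ℕ) where
  alloc : (Fin n → ℝ) → Fin n → ℝ
  pay : (Fin n → ℝ) → Fin n → ℝ
  alloc_nonneg : ∀ b i, 0 ≤ alloc b i
  alloc_sum_le_one : ∀ b, ∑ i, alloc b i ≤ 1
  meas_alloc : ∀ i, Measurable fun b => alloc b i
  meas_pay : ∀ i, Measurable fun b => pay b i

/-- Utility of bidder `i` with value `vi` when the bid profile is `b`. -/
def util {n : ℕ} (M : Mech n) (i : Fin n) (vi : ℝ) (b : Fin n → ℝ) : ℝ :=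
  vi * M.alloc b i - M.pay b i

/-- Dominant-strategy incentive compatibility. -/
def DSIC {n : ℕ} (M : Mech n) : Prop :=
  ∀ (i : Fin n) (v : Fin n → ℝ) (v' : ℝ),
    util M i (v i) (Function.update v i v') ≤ util M i (v i) v

/-- (Ex-post) individual rationality. -/
def IR {n : ℕ} (M : Mech n) : Prop :=
  ∀ (i : Fin n) (v : Fin n → ℝ), 0 ≤ util M i (v i) v

/-- Expected revenue of a mechanism under (truthful) bids drawn from `D`. -/
noncomputable def Rev {n : ℕ} (M : Mech n) (D : Measure (Fin n → ℝ)) : ℝ :=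
  ∫ b, (∑ i, M.pay b i) ∂D

/-- Optimal revenue over DSIC and IR mechanisms. -/
noncomputable def OPT {n : ℕ} (D : Measure (Fin n → ℝ)) : ℝ :=
  sSup {r | ∃ M : Mech n, DSIC M ∧ IR M ∧ r = Rev M D}

/-- The Lévy distance between `P` and `Q` is at most `ε`. -/
def LevyLe (P Q : Measure ℝ) (ε : ℝ) : Prop :=
  ∀ x : ℝ, (P (Iic (x - ε))).toReal - ε ≤ (Q (Iic x)).toReal ∧
    (Q (Iic x)).toReal ≤ (P (Iic (x + ε))).toReal + ε

/-- The Kolmogorov distance between `P` and `Q` is at most `ε`. -/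
def KolmogorovLe (P Q : Measure ℝ) (ε : ℝ) : Prop :=
  ∀ x : ℝ, |(P (Iic x)).toReal - (Q (Iic x)).toReal| ≤ ε

end SingleItem

open SingleItem

/-!
Translating all bids by a constant `c` and refunding `c` per unit of allocated item turns a
mechanism into one in which a bidder of value `v` faces exactly what a bidder of value `v + c`
faced before, so DSIC and IR survive, while the refund costs at most `max c 0` of revenue.
The right-shifted product distribution is the left-shifted one translated by `2ε`, which gives
the mechanism statement with `c = 2ε`; the bound on `OPT` follows by taking suprema, where the
translation by `-2ε` (which loses no revenue) shows that both suprema are finite or neither is.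
-/

theorem Real.sSup_sub_le_sSup_of_forall_exists {S T : Set ℝ} {a b : ℝ} (ha : 0 ≤ a)
    (hS : S.Nonempty) (hST : ∀ s ∈ S, ∃ t ∈ T, s - a ≤ t)
    (hTS : ∀ t ∈ T, ∃ s ∈ S, t - b ≤ s) :
    sSup S - a ≤ sSup T := by
  by_cases hT : BddAbove T
  · have : sSup S ≤ sSup T + a := csSup_le hS fun s hs => by
      obtain ⟨t, ht, hst⟩ := hST s hs
      linarith [le_csSup hT ht]
    linarith
  · have hS' : ¬BddAbove S := fun ⟨B, hB⟩ => hT ⟨B + b, fun t ht => by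
      obtain ⟨s, hs, hts⟩ := hTS t ht
      linarith [hB hs]⟩
    rw [Real.sSup_of_not_bddAbove hT, Real.sSup_of_not_bddAbove hS']
    linarith

namespace SingleItem

variable {n : ℕ}

theorem measurable_add_const_pi (c : ℝ) : Measurable fun (b : Fin n → ℝ) j => b j + c := by
  fun_prop

def nullMech (n : ℕ) : Mech n where
  alloc _ _ := 0
  pay _ _ := 0
  alloc_nonneg _ _ := le_rfl
  alloc_sum_le_one _ := by simp
  meas_alloc _ := measurable_const
  meas_pay _ := measurable_const

theorem nullMech_DSIC : DSIC (nullMech n) := fun _ _ _ => by simp [util, nullMech]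

theorem nullMech_IR : IR (nullMech n) := fun _ _ => by simp [util, nullMech]

theorem rev_nullMech (D : Measure (Fin n → ℝ)) : Rev (nullMech n) D = 0 := by
  simp [Rev, nullMech]

theorem OPT_sub_le_OPT_of_forall_exists {μ ν : Measure (Fin n → ℝ)} {a b : ℝ} (ha : 0 ≤ a)
    (hμν : ∀ M : Mech n, DSIC M → IR M →
      ∃ M' : Mech n, DSIC M' ∧ IR M' ∧ Rev M μ - a ≤ Rev M' ν)
    (hνμ : ∀ M : Mech n, DSIC M → IR M →
      ∃ M' : Mech n, DSIC M' ∧ IR M' ∧ Rev M ν - b ≤ Rev M' μ) :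
    OPT μ - a ≤ OPT ν := by
  refine Real.sSup_sub_le_sSup_of_forall_exists (b := b) ha
    ⟨0, nullMech n, nullMech_DSIC, nullMech_IR, (rev_nullMech μ).symm⟩ ?_ ?_
  · rintro _ ⟨M, hM, hM', rfl⟩
    obtain ⟨N, hN, hN', hle⟩ := hμν M hM hM'
    exact ⟨_, ⟨N, hN, hN', rfl⟩, hle⟩
  · rintro _ ⟨M, hM, hM', rfl⟩
    obtain ⟨N, hN, hN', hle⟩ := hνμ M hM hM'
    exact ⟨_, ⟨N, hN, hN', rfl⟩, hle⟩

namespace Mech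

def shift (M : Mech n) (c : ℝ) : Mech n where
  alloc b i := M.alloc (fun j => b j + c) i
  pay b i := M.pay (fun j => b j + c) i - c * M.alloc (fun j => b j + c) i
  alloc_nonneg _ i := M.alloc_nonneg _ i
  alloc_sum_le_one _ := M.alloc_sum_le_one _
  meas_alloc i := (M.meas_alloc i).comp (measurable_add_const_pi c)
  meas_pay i := ((M.meas_pay i).comp (measurable_add_const_pi c)).sub
    (((M.meas_alloc i).comp (measurable_add_const_pi c)).const_mul c)

theorem measurable_sum_pay (M : Mech n) : Measurable fun b => ∑ i, M.pay b i :=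
  Finset.measurable_sum _ fun i _ => M.meas_pay i

theorem measurable_sum_alloc (M : Mech n) : Measurable fun b => ∑ i, M.alloc b i :=
  Finset.measurable_sum _ fun i _ => M.meas_alloc i

theorem integrable_sum_alloc (M : Mech n) (μ : Measure (Fin n → ℝ)) [IsFiniteMeasure μ] :
    Integrable (fun b => ∑ i, M.alloc b i) μ :=
  (integrable_const (1 : ℝ)).mono' M.measurable_sum_alloc.aestronglyMeasurable <|
    .of_forall fun b => by
      rw [Real.norm_of_nonneg (Finset.sum_nonneg fun i _ => M.alloc_nonneg b i)]
      exact M.alloc_sum_le_one b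

theorem mul_integral_sum_alloc_le (M : Mech n) (c : ℝ) (μ : Measure (Fin n → ℝ))
    [IsProbabilityMeasure μ] : c * ∫ b, ∑ i, M.alloc b i ∂μ ≤ max c 0 := by
  have h0 : 0 ≤ ∫ b, ∑ i, M.alloc b i ∂μ :=
    integral_nonneg fun b => Finset.sum_nonneg fun i _ => M.alloc_nonneg b i
  have h1 : ∫ b, ∑ i, M.alloc b i ∂μ ≤ 1 := by
    simpa using integral_mono (M.integrable_sum_alloc μ) (integrable_const 1) M.alloc_sum_le_one
  rcases le_total 0 c with hc | hc
  · exact (mul_le_of_le_one_right hc h1).trans (le_max_left c 0)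
  · exact (mul_nonpos_of_nonpos_of_nonneg hc h0).trans (le_max_right c 0)

theorem util_shift (M : Mech n) (c : ℝ) (i : Fin n) (vi : ℝ) (b : Fin n → ℝ) :
    util (M.shift c) i vi b = util M i (vi + c) (fun j => b j + c) := by
  simp only [util, shift]
  ring

theorem rev_shift (M : Mech n) (c : ℝ) (ν : Measure (Fin n → ℝ)) :
    Rev (M.shift c) ν = ∫ b, ((∑ i, M.pay b i) - c * ∑ i, M.alloc b i)
      ∂ν.map fun b j => b j + c := by
  have hmeas : Measurable fun b => (∑ i, M.pay b i) - c * ∑ i, M.alloc b i :=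
    M.measurable_sum_pay.sub (M.measurable_sum_alloc.const_mul c)
  rw [Rev, integral_map (measurable_add_const_pi c).aemeasurable hmeas.aestronglyMeasurable]
  simp only [shift, Finset.sum_sub_distrib, Finset.mul_sum]

theorem rev_map_sub_le_rev_shift (M : Mech n) (c : ℝ) (ν : Measure (Fin n → ℝ))
    [IsProbabilityMeasure ν] :
    Rev M (ν.map fun b j => b j + c) - max c 0 ≤ Rev (M.shift c) ν := by
  set μ := ν.map fun (b : Fin n → ℝ) j => b j + c
  have : IsProbabilityMeasure μ :=
    Measure.isProbabilityMeasure_map (measurable_add_const_pi c).aemeasurable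
  have hA := M.integrable_sum_alloc μ
  rw [rev_shift, Rev]
  by_cases hP : Integrable (fun b => ∑ i, M.pay b i) μ
  · rw [integral_sub hP (hA.const_mul c), integral_const_mul]
    linarith [M.mul_integral_sum_alloc_le c μ]
  · have hP' : ¬Integrable (fun b => (∑ i, M.pay b i) - c * ∑ i, M.alloc b i) μ :=
      fun h => hP ((h.add (hA.const_mul c)).congr (.of_forall fun b => by simp))
    rw [integral_undef hP, integral_undef hP']
    simp

end Mech

theorem DSIC.shift {M : Mech n} (hM : DSIC M) (c : ℝ) : DSIC (M.shift c) := by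
  intro i v v'
  have hupd : (fun j => Function.update v i v' j + c)
      = Function.update (fun j => v j + c) i (v' + c) := by
    ext j
    rcases eq_or_ne j i with rfl | hj
    · simp
    · simp [Function.update_of_ne hj]
  simpa [Mech.util_shift, hupd] using hM i (fun j => v j + c) (v' + c)

theorem IR.shift {M : Mech n} (hM : IR M) (c : ℝ) : IR (M.shift c) := fun i v => by
  simpa [Mech.util_shift] using hM i fun j => v j + c

theorem exists_rev_map_sub_le {M : Mech n} (hM : DSIC M) (hM' : IR M) (c : ℝ)
    (ν : Measure (Fin n → ℝ)) [IsProbabilityMeasure ν] :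
    ∃ M' : Mech n, DSIC M' ∧ IR M' ∧
      Rev M (ν.map fun b j => b j + c) - max c 0 ≤ Rev M' ν :=
  ⟨M.shift c, hM.shift c, hM'.shift c, M.rev_map_sub_le_rev_shift c ν⟩

theorem map_add_const_pi_map {μ : Fin n → Measure ℝ} [∀ i, IsProbabilityMeasure (μ i)]
    {f g : ℝ → ℝ} (hf : Measurable f) {c : ℝ} (hfg : ∀ x, f x + c = g x) :
    (Measure.pi fun i => (μ i).map f).map (fun b j => b j + c) =
      Measure.pi fun i => (μ i).map g := by
  have : ∀ i, IsProbabilityMeasure ((μ i).map f) := fun i =>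
    Measure.isProbabilityMeasure_map hf.aemeasurable
  rw [Measure.pi_map_pi fun i => (measurable_add_const c).aemeasurable]
  congr 1
  ext1 i
  rw [Measure.map_map (measurable_add_const c) hf]
  congr 1
  exact funext hfg

end SingleItem

theorem stmt5_general (n : ℕ) (ε : ℝ) (hε : 0 < ε)
    (D : Fin n → Measure ℝ)
    (hDprob : ∀ i, IsProbabilityMeasure (D i)) :
    (∀ M : Mech n, DSIC M → IR M →
      ∃ M' : Mech n, DSIC M' ∧ IR M' ∧
        Rev M (Measure.pi fun i => (D i).map (· + ε)) - 2 * ε ≤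
          Rev M' (Measure.pi fun i => (D i).map (· - ε))) ∧
    OPT (Measure.pi fun i => (D i).map (· + ε)) - 2 * ε ≤
      OPT (Measure.pi fun i => (D i).map (· - ε)) := by
  have (i : Fin n) :=
    Measure.isProbabilityMeasure_map (μ := D i) (measurable_add_const ε).aemeasurable
  have (i : Fin n) :=
    Measure.isProbabilityMeasure_map (μ := D i) (measurable_sub_const ε).aemeasurable
  have hleft_to_right : (Measure.pi fun i => (D i).map (· - ε)).map (fun b j => b j + 2 * ε) =
      Measure.pi fun i => (D i).map (· + ε) :=
    map_add_const_pi_map (measurable_sub_const ε) fun x => by ring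
  have hright_to_left : (Measure.pi fun i => (D i).map (· + ε)).map (fun b j => b j + -(2 * ε)) =
      Measure.pi fun i => (D i).map (· - ε) :=
    map_add_const_pi_map (measurable_add_const ε) fun x => by ring
  have hmech : ∀ M : Mech n, DSIC M → IR M →
      ∃ M' : Mech n, DSIC M' ∧ IR M' ∧
        Rev M (Measure.pi fun i => (D i).map (· + ε)) - 2 * ε ≤
          Rev M' (Measure.pi fun i => (D i).map (· - ε)) := fun M hM hM' => by
    simpa [hleft_to_right, hε.le] using
      exists_rev_map_sub_le hM hM' (2 * ε) (Measure.pi fun i => (D i).map (· - ε))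
  refine ⟨hmech, OPT_sub_le_OPT_of_forall_exists (b := max (-(2 * ε)) 0) (by positivity) hmech
    fun M hM hM' => ?_⟩
  rw [← hright_to_left]
  exact exists_rev_map_sub_le hM hM' _ _

/-- shifted distributions have similar revenues: with `D̃ i` the `ε`-right
shift of `D i` and `D̰ i` the `ε`-left shift, every DSIC and IR mechanism `M` admits a DSIC
and IR mechanism `M'` with `Rev(M', ×ᵢ D̰ i) ≥ Rev(M, ×ᵢ D̃ i) − 2ε`; in particular
`OPT(×ᵢ D̰ i) ≥ OPT(×ᵢ D̃ i) − 2ε`. -/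
theorem stmt5 (n : ℕ) (H ε : ℝ) (hH : 0 < H) (hε : 0 < ε)
    (D : Fin n → Measure ℝ)
    (hDprob : ∀ i, IsProbabilityMeasure (D i))
    (hDsupp : ∀ i, D i (Icc 0 H) = 1) :
    (∀ M : Mech n, DSIC M → IR M →
      ∃ M' : Mech n, DSIC M' ∧ IR M' ∧
        Rev M (Measure.pi fun i => (D i).map (· + ε)) - 2 * ε ≤
          Rev M' (Measure.pi fun i => (D i).map (· - ε))) ∧
    OPT (Measure.pi fun i => (D i).map (· + ε)) - 2 * ε ≤
      OPT (Measure.pi fun i => (D i).map (· - ε)) :=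
  stmt5_general n ε hε D hDprob
end

section
/- Let F and F̂ be probability distributions on ℝ_{≥0}^k (with the ℓ1 metric) whose Prokhorov distance satisfies ‖F − F̂‖_P ≤ ε, and let δ > 0. Then E_{ℓ ∼ Uniform([0,δ]^k)} [ ‖⌊F⌋_{ℓ,δ} − ⌊F̂⌋_{ℓ,δ}‖_{TV} ] ≤ (1 + 1/δ)·ε. -/
open MeasureTheory Set

namespace MultiItem

/-- Feasible deterministic allocations of `m` items to `n` bidders: each item goes to at
most one bidder. -/
def Alloc (n m : ℕ) : Type :=
  {x : Fin n → Fin m → Bool // ∀ j : Fin m, (Finset.univ.filter fun i => x i j = true).card ≤ 1}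

instance (n m : ℕ) : Fintype (Alloc n m) := by
  unfold Alloc; infer_instance

instance (n m : ℕ) : DecidableEq (Alloc n m) := by
  unfold Alloc; infer_instance

/-- The empty allocation: nobody gets anything. -/
def emptyAlloc (n m : ℕ) : Alloc n m :=
  ⟨fun _ _ => false, by intro j; simp⟩

/-- Measurable-space structure on `Option α`: a set is measurable iff its preimage under
`some` is measurable. -/
instance {α : Type*} [m₀ : MeasurableSpace α] : MeasurableSpace (Option α) :=
  MeasurableSpace.map some m₀

/-- A (randomized) multi-item mechanism, represented by the distribution over allocations
and the expected payments induced on each bid profile; the bid `none` is the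
non-participation symbol `⊥`, which results in the empty allocation and zero payments. -/
structure Mechanism (n m : ℕ) where
  allocProb : (Fin n → Option (Fin m → ℝ)) → Alloc n m → ℝ
  pay : (Fin n → Option (Fin m → ℝ)) → Fin n → ℝ
  allocProb_nonneg : ∀ b x, 0 ≤ allocProb b x
  allocProb_sum_one : ∀ b, ∑ x : Alloc n m, allocProb b x = 1
  optOut : ∀ b, (∃ i, b i = none) →
    (allocProb b = fun x => if x = emptyAlloc n m then 1 else 0) ∧ pay b = fun _ => 0
  meas_allocProb : ∀ x, Measurable fun b => allocProb b x
  meas_pay : ∀ i, Measurable fun b => pay b i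

variable {n m : ℕ}

/-- Expected utility of bidder `i` with type `t` under bid profile `b`, for the valuation
profile `v`. -/
def util (v : Fin n → (Fin m → ℝ) → Alloc n m → ℝ) (M : Mechanism n m)
    (i : Fin n) (t : Fin m → ℝ) (b : Fin n → Option (Fin m → ℝ)) : ℝ :=
  (∑ x : Alloc n m, M.allocProb b x * v i t x) - M.pay b i

/-- (Ex-post) individual rationality on type profiles from `[0,H]^m`. -/
def IsIR (H : ℝ) (v : Fin n → (Fin m → ℝ) → Alloc n m → ℝ) (M : Mechanism n m) : Prop :=
  ∀ t : Fin n → Fin m → ℝ, (∀ i j, t i j ∈ Icc (0:ℝ) H) →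
    ∀ i, 0 ≤ util v M i (t i) fun j => some (t j)

/-- Interim expected utility of bidder `i` with type `t` bidding `bid`, when all other
bidders bid their true types drawn from `D`. -/
noncomputable def interim (v : Fin n → (Fin m → ℝ) → Alloc n m → ℝ) (M : Mechanism n m)
    (D : Fin n → Measure (Fin m → ℝ)) (i : Fin n) (t : Fin m → ℝ)
    (bid : Option (Fin m → ℝ)) : ℝ :=
  ∫ b, util v M i t (fun j => if j = i then bid else some (b j)) ∂(Measure.pi D)

/-- The (topological) support of a measure. -/
def msupport {α : Type*} [TopologicalSpace α] [MeasurableSpace α] (μ : Measure α) : Set α :=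
  {x | ∀ U : Set α, IsOpen U → x ∈ U → 0 < μ U}

/-- `η`-Bayesian incentive compatibility w.r.t. the product of the `D i` (misreports range
over types in `[0,H]^m` and the non-participation bid `⊥`). -/
def IsBIC (η H : ℝ) (v : Fin n → (Fin m → ℝ) → Alloc n m → ℝ)
    (M : Mechanism n m) (D : Fin n → Measure (Fin m → ℝ)) : Prop :=
  ∀ i : Fin n, ∀ t ∈ msupport (D i), ∀ bid : Option (Fin m → ℝ),
    (∀ s ∈ bid, ∀ j, s j ∈ Icc (0:ℝ) H) →
    interim v M D i t bid ≤ interim v M D i t (some t) + η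

/-- Expected revenue under truthful bidding from `D`. -/
noncomputable def RevT (M : Mechanism n m) (D : Fin n → Measure (Fin m → ℝ)) : ℝ :=
  ∫ b, (∑ i, M.pay (fun j => some (b j)) i) ∂(Measure.pi D)

/-- Optimal revenue over `η`-BIC and IR mechanisms. -/
noncomputable def OPT (η H : ℝ) (v : Fin n → (Fin m → ℝ) → Alloc n m → ℝ)
    (D : Fin n → Measure (Fin m → ℝ)) : ℝ :=
  sSup {r | ∃ M : Mechanism n m, IsIR H v M ∧ IsBIC η H v M D ∧ r = RevT M D}

/-- The distribution is supported on the box `[0,H]^m`. -/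
def suppBox (H : ℝ) (μ : Measure (Fin m → ℝ)) : Prop :=
  μ {t | ∀ j, t j ∈ Icc (0:ℝ) H} = 1

/-- The total variation distance between `P` and `Q` is at most `ε`. -/
def TVLe {α : Type*} [MeasurableSpace α] (P Q : Measure α) (ε : ℝ) : Prop :=
  ∀ A : Set α, MeasurableSet A → |(P A).toReal - (Q A).toReal| ≤ ε

/-- The total variation distance between two measures. -/
noncomputable def tvDist {α : Type*} [MeasurableSpace α] (P Q : Measure α) : ℝ :=
  sSup {r | ∃ A : Set α, MeasurableSet A ∧ r = |(P A).toReal - (Q A).toReal|}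

/-- The Prokhorov distance (w.r.t. the `ℓ1` metric) between `P` and `Q` is at most `ε`. -/
def ProkhorovLe {k : ℕ} (P Q : Measure (Fin k → ℝ)) (ε : ℝ) : Prop :=
  ∀ ε' : ℝ, ε < ε' → ∀ A : Set (Fin k → ℝ), MeasurableSet A →
    P A ≤ Q {x | ∃ y ∈ A, (∑ j, |x j - y j|) < ε'} + ENNReal.ofReal ε' ∧
    Q A ≤ P {x | ∃ y ∈ A, (∑ j, |x j - y j|) < ε'} + ENNReal.ofReal ε'

/-- Round `x ≥ 0` down to the grid `{0} ∪ {ℓ + i·δ : i ∈ ℤ≥0}`. -/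
noncomputable def roundPt (ℓ δ x : ℝ) : ℝ :=
  if x < ℓ then 0 else ℓ + ⌊(x - ℓ) / δ⌋ * δ

/-- The pushforward `⌊F⌋_{ℓ,δ}` of a distribution under coordinatewise rounding. -/
noncomputable def roundMeasure {k : ℕ} (ℓ : Fin k → ℝ) (δ : ℝ)
    (F : Measure (Fin k → ℝ)) : Measure (Fin k → ℝ) :=
  F.map fun x j => roundPt (ℓ j) δ (x j)

end MultiItem

open MultiItem

/-!
For a fixed shift `ℓ` both rounded distributions live on a countable grid, so their total
variation distance is `F(S_ℓ) - F̂(S_ℓ)`, where `S_ℓ` is the union of the rounding cells carrying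
more `F`- than `F̂`-mass. By Fubini the expectation over `ℓ` equals `∫ G dF - ∫ G dF̂` for
`G x = P_ℓ(x ∈ S_ℓ) ∈ [0,1]`. Since `x` and `y` fall into different cells with probability at
most `‖x - y‖₁ / δ`, `G` is `1/δ`-Lipschitz, so the `ε'`-neighbourhood of `{G > t}` lies in
`{G > t - ε'/δ}`; the Prokhorov bound on these superlevel sets and the layer-cake formula give
`∫ G dF - ∫ G dF̂ ≤ ε' + ε'/δ` for every `ε' > ε`.
-/

section FiberExcess

variable {α β : Type*} [MeasurableSpace α] [MeasurableSpace β] [MeasurableSingletonClass β]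
  {P Q : Measure α} {r : α → β}

def fiberExcess (P Q : Measure α) (r : α → β) : Set β :=
  {b | Q (r ⁻¹' {b}) < P (r ⁻¹' {b})}

lemma measure_preimage_le_of_forall_fiber_le (hr : Measurable r) {s : Set β} (hs : s.Countable)
    (h : ∀ b ∈ s, P (r ⁻¹' {b}) ≤ Q (r ⁻¹' {b})) : P (r ⁻¹' s) ≤ Q (r ⁻¹' s) := by
  have hfib : ∀ b ∈ s, MeasurableSet (r ⁻¹' {b}) := fun b _ => hr (measurableSet_singleton b)
  rw [← tsum_measure_preimage_singleton hs hfib, ← tsum_measure_preimage_singleton hs hfib]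
  exact ENNReal.tsum_le_tsum fun b => h b b.2

lemma measurableSet_preimage_of_countable_range (hr : Measurable r) (hrc : (range r).Countable)
    (s : Set β) : MeasurableSet (r ⁻¹' s) := by
  rw [← preimage_inter_range]
  exact hr (hrc.mono inter_subset_right).measurableSet

lemma measure_preimage_add_measure_fiberExcess_le (hr : Measurable r)
    (hrc : (range r).Countable) {A : Set β} (hA : MeasurableSet A) :
    P (r ⁻¹' A) + Q (r ⁻¹' fiberExcess P Q r) ≤ Q (r ⁻¹' A) + P (r ⁻¹' fiberExcess P Q r) := by
  set E := fiberExcess P Q r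
  have hE := measurableSet_preimage_of_countable_range hr hrc E
  have hAE : P (r ⁻¹' (A \ E)) ≤ Q (r ⁻¹' (A \ E)) := by
    rw [← preimage_inter_range]
    exact measure_preimage_le_of_forall_fiber_le hr (hrc.mono inter_subset_right)
      fun b hb => not_lt.1 hb.1.2
  have hEA : Q (r ⁻¹' (E \ A)) ≤ P (r ⁻¹' (E \ A)) := by
    rw [← preimage_inter_range]
    exact measure_preimage_le_of_forall_fiber_le hr (hrc.mono inter_subset_right)
      fun b hb => hb.1.1.le
  rw [← measure_inter_add_sdiff (r ⁻¹' A) hE, ← measure_inter_add_sdiff (r ⁻¹' E) (hr hA),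
    ← measure_inter_add_sdiff (r ⁻¹' A) hE, ← measure_inter_add_sdiff (r ⁻¹' E) (hr hA),
    ← preimage_sdiff, ← preimage_sdiff, inter_comm (r ⁻¹' E)]
  calc _ ≤ P (r ⁻¹' A ∩ r ⁻¹' E) + Q (r ⁻¹' (A \ E)) +
        (Q (r ⁻¹' A ∩ r ⁻¹' E) + P (r ⁻¹' (E \ A))) := by gcongr
    _ = _ := by ring

lemma tvDist_map_le [IsProbabilityMeasure P] [IsProbabilityMeasure Q] (hr : Measurable r)
    (hrc : (range r).Countable) :
    tvDist (P.map r) (Q.map r) ≤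
      P.real (r ⁻¹' fiberExcess P Q r) - Q.real (r ⁻¹' fiberExcess P Q r) := by
  have key : ∀ A, MeasurableSet A → P.real (r ⁻¹' A) - Q.real (r ⁻¹' A) ≤
      P.real (r ⁻¹' fiberExcess P Q r) - Q.real (r ⁻¹' fiberExcess P Q r) := by
    intro A hA
    have h := ENNReal.toReal_mono (by finiteness)
      (measure_preimage_add_measure_fiberExcess_le (P := P) (Q := Q) hr hrc hA)
    rw [ENNReal.toReal_add (by finiteness) (by finiteness),
      ENNReal.toReal_add (by finiteness) (by finiteness)] at h
    simp only [measureReal_def]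
    linarith
  refine Real.sSup_le ?_ (by simpa using key ∅ MeasurableSet.empty)
  rintro _ ⟨A, hA, rfl⟩
  rw [Measure.map_apply hr hA, Measure.map_apply hr hA, abs_le]
  refine ⟨?_, key A hA⟩
  have hc := key Aᶜ hA.compl
  rw [preimage_compl, probReal_compl_eq_one_sub (hr hA),
    probReal_compl_eq_one_sub (hr hA)] at hc
  simp only [measureReal_def] at hc ⊢
  linarith

end FiberExcess

section RandomMap

variable {γ α β : Type*} [MeasurableSpace γ] [MeasurableSpace α] [MeasurableSpace β]

lemma integral_measureReal_slice_comm (ν : Measure γ) (μ : Measure α) [IsFiniteMeasure ν]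
    [IsFiniteMeasure μ] {B : Set (γ × α)} (hB : MeasurableSet B) :
    ∫ ℓ, μ.real (Prod.mk ℓ ⁻¹' B) ∂ν = ∫ x, ν.real ((·, x) ⁻¹' B) ∂μ := by
  simp only [measureReal_def]
  rw [integral_toReal (measurable_measure_prodMk_left hB).aemeasurable
      (ae_of_all _ fun _ => measure_lt_top _ _),
    integral_toReal (measurable_measure_prodMk_right hB).aemeasurable
      (ae_of_all _ fun _ => measure_lt_top _ _),
    ← Measure.prod_apply hB, Measure.prod_apply_symm hB]

lemma integrable_measureReal_prodMk_left (ν : Measure γ) (μ : Measure α) [IsFiniteMeasure ν]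
    [IsFiniteMeasure μ] {B : Set (γ × α)} (hB : MeasurableSet B) :
    Integrable (fun ℓ => μ.real (Prod.mk ℓ ⁻¹' B)) ν :=
  .of_bound (measurable_measure_prodMk_left hB).ennreal_toReal.aestronglyMeasurable (μ.real univ)
    (ae_of_all _ fun _ => by
      rw [Real.norm_of_nonneg measureReal_nonneg]; exact measureReal_mono (subset_univ _))

variable [MeasurableEq β]

/-- The test function is `G x = ν {ℓ | r ℓ x ∈ fiberExcess P Q (r ℓ)}`; by Fubini its integrals
against `P` and `Q` are the expected masses of the random excess set. -/
theorem exists_integral_tvDist_map_le (ν : Measure γ) [IsProbabilityMeasure ν]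
    (P Q : Measure α) [IsProbabilityMeasure P] [IsProbabilityMeasure Q] {r : γ → α → β}
    (hr : Measurable (Function.uncurry r)) (hrc : ∀ ℓ, (range (r ℓ)).Countable) :
    ∃ G : α → ℝ, Measurable G ∧ (∀ x, G x ∈ Icc 0 1) ∧
      (∀ x y, G x ≤ G y + ν.real {ℓ | r ℓ x ≠ r ℓ y}) ∧
      ∫ ℓ, tvDist (P.map (r ℓ)) (Q.map (r ℓ)) ∂ν ≤ ∫ x, G x ∂P - ∫ x, G x ∂Q := by
  set B : Set (γ × α) := {p | r p.1 p.2 ∈ fiberExcess P Q (r p.1)}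
  have hB : MeasurableSet B := by
    have hU : MeasurableSet {q : (γ × α) × α | r q.1.1 q.2 = r q.1.1 q.1.2} :=
      measurableSet_eq_fun (hr.comp (measurable_fst.fst.prodMk measurable_snd))
        (hr.comp (measurable_fst.fst.prodMk measurable_fst.snd))
    exact measurableSet_lt (measurable_measure_prodMk_left hU)
      (measurable_measure_prodMk_left hU)
  have hrℓ : ∀ ℓ, Measurable (r ℓ) := fun ℓ => hr.comp measurable_prodMk_left
  refine ⟨fun x => ν.real ((·, x) ⁻¹' B), (measurable_measure_prodMk_right hB).ennreal_toReal,
    fun x => ⟨measureReal_nonneg, measureReal_le_one⟩, fun x y => ?_, ?_⟩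
  · have hsub : (·, x) ⁻¹' B ⊆ (·, y) ⁻¹' B ∪ {ℓ | r ℓ x ≠ r ℓ y} := by
      intro ℓ hℓ
      by_cases hxy : r ℓ x = r ℓ y
      · left; simpa [B, hxy] using hℓ
      · exact Or.inr hxy
    exact (measureReal_mono hsub).trans (measureReal_union_le _ _)
  · calc ∫ ℓ, tvDist (P.map (r ℓ)) (Q.map (r ℓ)) ∂ν
        ≤ ∫ ℓ, (P.real (Prod.mk ℓ ⁻¹' B) - Q.real (Prod.mk ℓ ⁻¹' B)) ∂ν := by
          refine integral_mono_of_nonneg (ae_of_all _ fun ℓ => ?_) ?_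
            (ae_of_all _ fun ℓ => tvDist_map_le (hrℓ ℓ) (hrc ℓ))
          · exact Real.sSup_nonneg fun _ ⟨_, _, h⟩ => h ▸ abs_nonneg _
          · exact (integrable_measureReal_prodMk_left ν P hB).sub
              (integrable_measureReal_prodMk_left ν Q hB)
      _ = ∫ x, ν.real ((·, x) ⁻¹' B) ∂P - ∫ x, ν.real ((·, x) ⁻¹' B) ∂Q := by
          rw [integral_sub (integrable_measureReal_prodMk_left ν P hB)
            (integrable_measureReal_prodMk_left ν Q hB), integral_measureReal_slice_comm ν P hB,
            integral_measureReal_slice_comm ν Q hB]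

end RandomMap

section Prokhorov

lemma integral_eq_intervalIntegral_measureReal_lt {α : Type*} [MeasurableSpace α]
    (μ : Measure α) [IsFiniteMeasure μ] {G : α → ℝ} (hG : Measurable G)
    (hG01 : ∀ x, G x ∈ Icc 0 1) :
    ∫ x, G x ∂μ = ∫ t in (0:ℝ)..1, μ.real {x | t < G x} := by
  have hint : Integrable G μ := .of_bound hG.aestronglyMeasurable 1 (ae_of_all _ fun x => by
    rw [Real.norm_of_nonneg (hG01 x).1]; exact (hG01 x).2)
  rw [hint.integral_eq_integral_meas_lt (ae_of_all _ fun x => (hG01 x).1),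
    intervalIntegral.integral_of_le zero_le_one,
    setIntegral_eq_of_subset_of_forall_sdiff_eq_zero measurableSet_Ioi Ioc_subset_Ioi_self]
  rintro t ⟨ht, ht1⟩
  have : {x | t < G x} = ∅ := eq_empty_of_forall_notMem fun x hx =>
    ht1 ⟨ht, (le_of_lt hx).trans (hG01 x).2⟩
  simp [this]

lemma intervalIntegral_comp_sub_le_add {ψ : ℝ → ℝ} (hψ : Antitone ψ) (hψ0 : ∀ t, 0 ≤ ψ t)
    (hψ1 : ∀ t, ψ t ≤ 1) {c : ℝ} (hc : 0 ≤ c) :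
    ∫ t in (0:ℝ)..1, ψ (t - c) ≤ c + ∫ t in (0:ℝ)..1, ψ t := by
  have hi : ∀ a b : ℝ, IntervalIntegrable ψ volume a b := fun _ _ => hψ.intervalIntegrable
  rw [intervalIntegral.integral_comp_sub_right ψ c, zero_sub]
  have hsplit := (intervalIntegral.integral_add_adjacent_intervals (hi (-c) (1 - c)) (hi _ 1)).trans
    (intervalIntegral.integral_add_adjacent_intervals (hi (-c) 0) (hi 0 1)).symm
  have hleft : ∫ t in (-c)..0, ψ t ≤ c := by
    simpa using intervalIntegral.integral_mono_on (neg_nonpos.2 hc) (hi _ _)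
      (intervalIntegrable_const (c := 1)) fun t _ => hψ1 t
  have hright : 0 ≤ ∫ t in (1 - c)..1, ψ t :=
    intervalIntegral.integral_nonneg (by linarith) fun t _ => hψ0 t
  linarith

lemma antitone_measureReal_lt {α : Type*} [MeasurableSpace α] (μ : Measure α)
    [IsFiniteMeasure μ] (G : α → ℝ) : Antitone fun t => μ.real {x | t < G x} :=
  fun _ _ hst => measureReal_mono fun _ hx => lt_of_le_of_lt hst hx

variable {k : ℕ} {F Fhat : Measure (Fin k → ℝ)} {ε L : ℝ} {G : (Fin k → ℝ) → ℝ}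

/-- An `ε'`-thickening of a superlevel set of `G` lies in a superlevel set lowered by `L ε'`. -/
lemma measureReal_lt_le_of_prokhorovLe [IsFiniteMeasure Fhat] (hPQ : ProkhorovLe F Fhat ε)
    (hG : Measurable G) (hLip : ∀ x y, G x ≤ G y + L * ∑ j, |x j - y j|) (hL : 0 ≤ L)
    {ε' : ℝ} (hε' : ε < ε') (hε'0 : 0 < ε') (t : ℝ) :
    F.real {x | t < G x} ≤ Fhat.real {x | t - L * ε' < G x} + ε' := by
  have hthick : {x | ∃ y ∈ {x | t < G x}, ∑ j, |x j - y j| < ε'} ⊆ {x | t - L * ε' < G x} := by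
    rintro x ⟨y, hy, hxy⟩
    have := hLip y x
    simp only [abs_sub_comm (y _)] at this
    simp only [mem_ofPred_eq] at hy ⊢
    nlinarith
  calc F.real {x | t < G x}
      ≤ (Fhat {x | ∃ y ∈ {x | t < G x}, ∑ j, |x j - y j| < ε'} + ENNReal.ofReal ε').toReal :=
        ENNReal.toReal_mono (by finiteness)
          (hPQ ε' hε' _ (measurableSet_lt measurable_const hG)).1
    _ ≤ Fhat.real {x | t - L * ε' < G x} + ε' := by
        rw [ENNReal.toReal_add (by finiteness) ENNReal.ofReal_ne_top,
          ENNReal.toReal_ofReal hε'0.le]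
        gcongr
        exact measureReal_mono hthick

theorem integral_sub_integral_le_of_prokhorovLe [IsProbabilityMeasure F]
    [IsProbabilityMeasure Fhat] (hPQ : ProkhorovLe F Fhat ε) (hε : 0 ≤ ε) (hL : 0 ≤ L)
    (hG : Measurable G) (hG01 : ∀ x, G x ∈ Icc 0 1)
    (hLip : ∀ x y, G x ≤ G y + L * ∑ j, |x j - y j|) :
    ∫ x, G x ∂F - ∫ x, G x ∂Fhat ≤ (1 + L) * ε := by
  rw [← div_le_iff₀' (by positivity)]
  refine le_of_forall_gt_imp_ge_of_dense fun ε' hε' => ?_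
  rw [div_le_iff₀' (by positivity), integral_eq_intervalIntegral_measureReal_lt F hG hG01,
    integral_eq_intervalIntegral_measureReal_lt Fhat hG hG01]
  have hψc : Antitone fun t => Fhat.real {x | t - L * ε' < G x} :=
    (antitone_measureReal_lt Fhat G).comp_monotone fun _ _ h => sub_le_sub_right h _
  have hshift : ∫ t in (0:ℝ)..1, Fhat.real {x | t - L * ε' < G x} ≤
      L * ε' + ∫ t in (0:ℝ)..1, Fhat.real {x | t < G x} :=
    intervalIntegral_comp_sub_le_add (antitone_measureReal_lt Fhat G)
      (fun _ => measureReal_nonneg) (fun _ => measureReal_le_one)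
      (mul_nonneg hL (hε.trans hε'.le))
  have hlevel : ∫ t in (0:ℝ)..1, F.real {x | t < G x} ≤
      (∫ t in (0:ℝ)..1, Fhat.real {x | t - L * ε' < G x}) + ε' :=
    calc _ ≤ ∫ t in (0:ℝ)..1, (Fhat.real {x | t - L * ε' < G x} + ε') :=
          intervalIntegral.integral_mono_on zero_le_one
            (antitone_measureReal_lt F G).intervalIntegrable
            (hψc.intervalIntegrable.add intervalIntegrable_const) fun t _ =>
              measureReal_lt_le_of_prokhorovLe hPQ hG hLip hL hε' (hε.trans_lt hε') t
      _ = _ := by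
          rw [intervalIntegral.integral_add hψc.intervalIntegrable intervalIntegrable_const,
            intervalIntegral.integral_const, sub_zero, one_smul]
  linarith

end Prokhorov

section Rounding

lemma roundPt_ne_imp_exists_mem_uIoc {δ : ℝ} (hδ : 0 < δ) {a x y : ℝ}
    (h : roundPt a δ x ≠ roundPt a δ y) : ∃ i : ℤ, a + i * δ ∈ uIoc x y := by
  wlog hxy : x ≤ y generalizing x y
  · rw [uIoc_comm]; exact this h.symm (le_of_not_ge hxy)
  rw [uIoc_of_le hxy]
  rcases lt_or_ge y a with hya | hay
  · simp [roundPt, hya, hxy.trans_lt hya] at h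
  rcases lt_or_ge x a with hxa | hax
  · exact ⟨0, by simpa using hxa, by simpa using hay⟩
  have hfloor : ⌊(x - a) / δ⌋ < ⌊(y - a) / δ⌋ := by
    refine (Int.floor_mono (by gcongr)).lt_of_ne fun heq => h ?_
    simp only [roundPt, not_lt.2 hax, not_lt.2 hay, if_false, heq]
  refine ⟨⌊(y - a) / δ⌋, ?_, ?_⟩
  · have := (div_lt_iff₀ hδ).1 (Int.floor_lt.1 hfloor)
    linarith
  · have := (le_div_iff₀ hδ).1 (Int.floor_le ((y - a) / δ))
    linarith

open scoped Pointwise in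
/-- Projecting to `ℝ ⧸ δℤ` does not increase Lebesgue measure. -/
lemma volume_exists_add_zsmul_mem_inter_Ioc_le {δ : ℝ} (hδ : 0 < δ) (I : Set ℝ) :
    volume ({a | ∃ i : ℤ, a + i * δ ∈ I} ∩ Ioc 0 δ) ≤ volume I := by
  have : VAddInvariantMeasure (AddSubgroup.zmultiples δ) ℝ volume :=
    ⟨fun c s _ => measure_preimage_add _ _ _⟩
  have hsub : {a | ∃ i : ℤ, a + i * δ ∈ I} ∩ Ioc 0 δ ⊆
      ⋃ g : AddSubgroup.zmultiples δ, (g +ᵥ I) ∩ Ioc 0 (0 + δ) := by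
    rintro a ⟨⟨i, hi⟩, ha⟩
    refine mem_iUnion.2 ⟨⟨-i • δ, -i, rfl⟩, ⟨a + i * δ, hi, ?_⟩, by rwa [zero_add]⟩
    simp [zsmul_eq_mul]
  calc _ ≤ _ := measure_mono hsub
    _ ≤ _ := measure_iUnion_le _
    _ = volume I := ((isAddFundamentalDomain_Ioc hδ 0).measure_eq_tsum I).symm

lemma measurable_roundPt_uncurry (δ : ℝ) : Measurable fun p : ℝ × ℝ => roundPt p.1 δ p.2 :=
  Measurable.ite (measurableSet_lt measurable_snd measurable_fst) measurable_const <|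
    measurable_fst.add <|
      (measurable_from_top.comp ((measurable_snd.sub measurable_fst).div_const δ).floor).mul
        measurable_const

lemma countable_range_roundPt (ℓ δ : ℝ) : (range (roundPt ℓ δ)).Countable := by
  refine ((countable_range fun i : ℤ => ℓ + i * δ).insert 0).mono ?_
  rintro _ ⟨x, rfl⟩
  unfold roundPt
  split_ifs
  exacts [mem_insert _ _, mem_insert_of_mem _ ⟨_, rfl⟩]

lemma measurable_roundVec {k : ℕ} (δ : ℝ) :
    Measurable (Function.uncurry fun (ℓ x : Fin k → ℝ) j => roundPt (ℓ j) δ (x j)) :=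
  measurable_pi_lambda _ fun j =>
    (measurable_roundPt_uncurry δ).comp (f := fun p : (Fin k → ℝ) × (Fin k → ℝ) => (p.1 j, p.2 j))
      (by fun_prop)

lemma countable_range_roundVec {k : ℕ} (ℓ : Fin k → ℝ) (δ : ℝ) :
    (range fun (x : Fin k → ℝ) j => roundPt (ℓ j) δ (x j)).Countable :=
  (countable_pi fun j => countable_range_roundPt (ℓ j) δ).mono <| by
    rintro _ ⟨x, rfl⟩ j
    exact ⟨x j, rfl⟩

noncomputable def uniformIcc (δ : ℝ) : Measure ℝ :=
  (ENNReal.ofReal δ)⁻¹ • volume.restrict (Icc 0 δ)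

lemma isProbabilityMeasure_uniformIcc {δ : ℝ} (hδ : 0 < δ) :
    IsProbabilityMeasure (uniformIcc δ) := by
  constructor
  rw [uniformIcc, Measure.smul_apply, Measure.restrict_apply_univ, Real.volume_Icc, sub_zero,
    smul_eq_mul, ENNReal.inv_mul_cancel (by simpa using hδ) ENNReal.ofReal_ne_top]

lemma uniformIcc_roundPt_ne_le {δ : ℝ} (hδ : 0 < δ) (x y : ℝ) :
    uniformIcc δ {a | roundPt a δ x ≠ roundPt a δ y} ≤ ENNReal.ofReal (|x - y| / δ) := by
  have hsub : {a | roundPt a δ x ≠ roundPt a δ y} ⊆ {a | ∃ i : ℤ, a + i * δ ∈ uIoc x y} :=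
    fun a => roundPt_ne_imp_exists_mem_uIoc hδ
  rw [uniformIcc, Measure.smul_apply, smul_eq_mul,
    Measure.restrict_congr_set Ioc_ae_eq_Icc.symm, Measure.restrict_apply' measurableSet_Ioc,
    ENNReal.ofReal_div_of_pos hδ, ENNReal.div_eq_inv_mul, abs_sub_comm]
  gcongr
  calc _ ≤ _ := measure_mono (inter_subset_inter_left _ hsub)
    _ ≤ _ := volume_exists_add_zsmul_mem_inter_Ioc_le hδ _
    _ = _ := Real.volume_uIoc

lemma measureReal_pi_roundPt_ne_le {k : ℕ} {δ : ℝ} (hδ : 0 < δ) (x y : Fin k → ℝ) :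
    (Measure.pi fun _ : Fin k => uniformIcc δ).real
        {ℓ | (fun j => roundPt (ℓ j) δ (x j)) ≠ fun j => roundPt (ℓ j) δ (y j)} ≤
      1 / δ * ∑ j, |x j - y j| := by
  have := isProbabilityMeasure_uniformIcc hδ
  have hsub : {ℓ : Fin k → ℝ | (fun j => roundPt (ℓ j) δ (x j)) ≠ fun j => roundPt (ℓ j) δ (y j)}
      ⊆ ⋃ j, Function.eval j ⁻¹' {a | roundPt a δ (x j) ≠ roundPt a δ (y j)} := by
    intro ℓ hℓ
    obtain ⟨j, hj⟩ := Function.ne_iff.1 hℓ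
    exact mem_iUnion.2 ⟨j, hj⟩
  have hround : ∀ t, Measurable fun a => roundPt a δ t := fun t =>
    (measurable_roundPt_uncurry δ).comp (measurable_id.prodMk measurable_const)
  have hmeas : ∀ j, MeasurableSet {a | roundPt a δ (x j) ≠ roundPt a δ (y j)} := fun j =>
    (measurableSet_eq_fun (hround (x j)) (hround (y j))).compl
  have hbound : (Measure.pi fun _ : Fin k => uniformIcc δ)
      {ℓ | (fun j => roundPt (ℓ j) δ (x j)) ≠ fun j => roundPt (ℓ j) δ (y j)} ≤
      ENNReal.ofReal (1 / δ * ∑ j, |x j - y j|) := by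
    calc _ ≤ _ := measure_mono hsub
      _ ≤ _ := measure_iUnion_le _
      _ = ∑ j, uniformIcc δ {a | roundPt a δ (x j) ≠ roundPt a δ (y j)} := by
          rw [tsum_fintype]
          exact Finset.sum_congr rfl fun j _ =>
            (measurePreserving_eval _ j).measure_preimage (hmeas j).nullMeasurableSet
      _ ≤ ∑ j, ENNReal.ofReal (|x j - y j| / δ) :=
          Finset.sum_le_sum fun j _ => uniformIcc_roundPt_ne_le hδ _ _
      _ = _ := by
          rw [← ENNReal.ofReal_sum_of_nonneg fun j _ => by positivity, Finset.mul_sum]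
          simp only [one_div, inv_mul_eq_div]
  exact ENNReal.toReal_le_of_le_ofReal (by positivity) hbound

end Rounding

theorem stmt8_general (k : ℕ) (ε δ : ℝ) (hε : 0 ≤ ε) (hδ : 0 < δ)
    (F Fhat : Measure (Fin k → ℝ))
    (hF : IsProbabilityMeasure F) (hFhat : IsProbabilityMeasure Fhat)
    (hPQ : ProkhorovLe F Fhat ε) :
    ∫ ℓ, tvDist (roundMeasure ℓ δ F) (roundMeasure ℓ δ Fhat)
        ∂(Measure.pi fun _ : Fin k => (ENNReal.ofReal δ)⁻¹ • volume.restrict (Icc (0:ℝ) δ))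
      ≤ (1 + 1 / δ) * ε := by
  have := isProbabilityMeasure_uniformIcc hδ
  obtain ⟨G, hG, hG01, hGsep, hTV⟩ := exists_integral_tvDist_map_le
    (Measure.pi fun _ : Fin k => uniformIcc δ) F Fhat (measurable_roundVec δ)
    (fun ℓ => countable_range_roundVec ℓ δ)
  refine hTV.trans (integral_sub_integral_le_of_prokhorovLe hPQ hε (by positivity) hG hG01
    fun x y => ?_)
  exact (hGsep x y).trans (add_le_add le_rfl (measureReal_pi_roundPt_ne_le hδ x y))

/-- Prokhorov closeness gives small expected TV distance after random
rounding: if `F`, `F̂` are distributions on `ℝ≥0^k` with Prokhorov distance at most `ε`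
(w.r.t. the `ℓ1` metric), then for a uniformly random grid shift `ℓ ∈ [0,δ]^k`, the expected
total variation distance between the rounded distributions `⌊F⌋_{ℓ,δ}` and `⌊F̂⌋_{ℓ,δ}` is
at most `(1 + 1/δ)·ε`. -/
theorem stmt8 (k : ℕ) (ε δ : ℝ) (hε : 0 ≤ ε) (hδ : 0 < δ)
    (F Fhat : Measure (Fin k → ℝ))
    (hF : IsProbabilityMeasure F) (hFhat : IsProbabilityMeasure Fhat)
    (hFpos : F {x | ∀ j, 0 ≤ x j} = 1) (hFhatpos : Fhat {x | ∀ j, 0 ≤ x j} = 1)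
    (hPQ : ProkhorovLe F Fhat ε) :
    ∫ ℓ, tvDist (roundMeasure ℓ δ F) (roundMeasure ℓ δ Fhat)
        ∂(Measure.pi fun _ : Fin k => (ENNReal.ofReal δ)⁻¹ • volume.restrict (Icc (0:ℝ) δ))
      ≤ (1 + 1 / δ) * ε :=
  stmt8_general k ε δ hε hδ F Fhat hF hFhat hPQ
end

section
/- There exist absolute constants C₁, C₂ such that the following holds in the single-bidder (n = 1) multi-item setting. Let D be a distribution supported on [0,H]^m, let c ∈ (0,1], and let M be an IC and IR mechanism with Rev(M, D) ≥ c·OPT(D). Then there exists an IC and IR mechanism M̂, constructed from M and D alone (oblivious to the true distribution), such that for every distribution D̂ supported on [0,H]^m with Prokhorov distance ‖D − D̂‖_P ≤ ε: Rev(M̂, D̂) ≥ c·(1 − √κ)·OPT(D̂) − C₂·(κ + (√(mLH) + 1)·√κ), where κ = C₁·(mLHε + mL√(Hε)). -/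
open MeasureTheory Set

namespace OneBidder

/-- Measurable-space structure on `Option α`: a set is measurable iff its preimage under
`some` is measurable. -/
instance {α : Type*} [m₀ : MeasurableSpace α] : MeasurableSpace (Option α) :=
  MeasurableSpace.map some m₀

/-- A (randomized) single-bidder multi-item mechanism, represented by the distribution over
allocations in `{0,1}^m` and the expected payment induced on each bid; the bid `none` is
the non-participation symbol `⊥`, yielding no allocation and zero payment. -/
structure Mech (m : ℕ) where
  allocProb : Option (Fin m → ℝ) → (Fin m → Bool) → ℝ
  pay : Option (Fin m → ℝ) → ℝ
  allocProb_nonneg : ∀ b x, 0 ≤ allocProb b x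
  allocProb_sum_one : ∀ b, ∑ x : Fin m → Bool, allocProb b x = 1
  optOut : (allocProb none = fun x => if x = (fun _ => false) then 1 else 0) ∧ pay none = 0
  meas_allocProb : ∀ x, Measurable fun b => allocProb b x
  meas_pay : Measurable pay

variable {m : ℕ}

/-- Expected utility of the bidder with type `t` bidding `b`, for the valuation `v`. -/
def util (v : (Fin m → ℝ) → (Fin m → Bool) → ℝ) (M : Mech m)
    (t : Fin m → ℝ) (b : Option (Fin m → ℝ)) : ℝ :=
  (∑ x : Fin m → Bool, M.allocProb b x * v t x) - M.pay b

/-- Incentive compatibility over types in `[0,H]^m`. -/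
def IsIC (H : ℝ) (v : (Fin m → ℝ) → (Fin m → Bool) → ℝ) (M : Mech m) : Prop :=
  ∀ t t' : Fin m → ℝ, (∀ j, t j ∈ Icc (0:ℝ) H) → (∀ j, t' j ∈ Icc (0:ℝ) H) →
    util v M t (some t') ≤ util v M t (some t)

/-- Individual rationality over types in `[0,H]^m`. -/
def IsIR (H : ℝ) (v : (Fin m → ℝ) → (Fin m → Bool) → ℝ) (M : Mech m) : Prop :=
  ∀ t : Fin m → ℝ, (∀ j, t j ∈ Icc (0:ℝ) H) → 0 ≤ util v M t (some t)

/-- Expected revenue under truthful bidding from `D`. -/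
noncomputable def Rev (M : Mech m) (D : Measure (Fin m → ℝ)) : ℝ :=
  ∫ t, M.pay (some t) ∂D

/-- Optimal revenue over IC and IR mechanisms. -/
noncomputable def OPT (H : ℝ) (v : (Fin m → ℝ) → (Fin m → Bool) → ℝ)
    (D : Measure (Fin m → ℝ)) : ℝ :=
  sSup {r | ∃ M : Mech m, IsIC H v M ∧ IsIR H v M ∧ r = Rev M D}

/-- The distribution is supported on the box `[0,H]^m`. -/
def suppBox (H : ℝ) (μ : Measure (Fin m → ℝ)) : Prop :=
  μ {t | ∀ j, t j ∈ Icc (0:ℝ) H} = 1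

/-- The Prokhorov distance (w.r.t. the `ℓ1` metric) between `P` and `Q` is at most `ε`. -/
def ProkhorovLe {k : ℕ} (P Q : Measure (Fin k → ℝ)) (ε : ℝ) : Prop :=
  ∀ ε' : ℝ, ε < ε' → ∀ A : Set (Fin k → ℝ), MeasurableSet A →
    P A ≤ Q {x | ∃ y ∈ A, (∑ j, |x j - y j|) < ε'} + ENNReal.ofReal ε' ∧
    Q A ≤ P {x | ∃ y ∈ A, (∑ j, |x j - y j|) < ε'} + ENNReal.ofReal ε'

end OneBidder

open OneBidder

/-!
From an IC and IR mechanism `N`, keep a finite set of its menu entries, cut every positive price by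
the factor `1 - η`, subtract a rebate `ζ`, and let each type choose its favourite kept entry.
Compactness of the type box and the Lipschitz valuations make finitely many entries `ζ`-optimal
for every type, so the rebate preserves IR, and the choice is a measurable argmax. The discount is
what makes prices stable: if `t'` is within `ℓ¹`-distance `δ` of `t`, then the entry `t'` picks is
priced at least `N`'s price at `t` minus `(2Lδ + ζ)/η`, since otherwise IC of `N` at `t` and `t'`
is violated. By the layer-cake formula a one-sided Prokhorov bound then moves the revenue from
`D` to `D̂` at a cost of order `Lε/η + mLHε + ζ`. Applied to `M` this bounds `Rev(M̂, D̂)`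
from below; applied to every mechanism for `D̂` it bounds `OPT(D̂)` by `OPT(D)/(1 - η)` plus the
same cost. The choice `η = √κ/2`, `ζ = κ` gives the theorem with `C₁ = 1`, `C₂ = 12`; when
`√κ ≥ 1` or `m = 0` the null mechanism already does.
-/

open Filter Topology

theorem exists_measurable_forall_le_finset {α ι : Type*} [MeasurableSpace α] [MeasurableSpace ι]
    (s : Finset ι) (hs : s.Nonempty) (g : ι → α → ℝ) (hg : ∀ i ∈ s, Measurable (g i)) :
    ∃ φ : α → ι, Measurable φ ∧ ∀ x, φ x ∈ s ∧ ∀ i ∈ s, g i x ≤ g (φ x) x := by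
  classical
  obtain ⟨e, he⟩ := s.countable_toSet.exists_eq_range (Finset.coe_nonempty.2 hs)
  have he_mem : ∀ n, e n ∈ s := fun n => by
    rw [← Finset.mem_coe, he]; exact mem_range_self n
  have hmax : ∀ x, ∃ n, ∀ i ∈ s, g i x ≤ g (e n) x := fun x => by
    obtain ⟨i, hi, hi_max⟩ := s.exists_max_image (g · x) hs
    obtain ⟨n, rfl⟩ : i ∈ range e := he ▸ hi
    exact ⟨n, hi_max⟩
  refine ⟨fun x => e (Nat.find (hmax x)),
    Measurable.find (fun n => measurable_const) (fun n => ?_) hmax,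
    fun x => ⟨he_mem _, Nat.find_spec (hmax x)⟩⟩
  simp only [ofPred_forall]
  exact .biInter s.countable_toSet fun i hi => measurableSet_le (hg i hi) (hg _ (he_mem n))

theorem exists_measurable_near_argmax {α ι : Type*} [TopologicalSpace α] [MeasurableSpace α]
    [OpensMeasurableSpace α] [MeasurableSpace ι] {K : Set α} (hK : IsCompact K) {s : Set ι}
    (hs : s.Nonempty) {g : ι → α → ℝ} (hg : ∀ i, Continuous (g i))
    (hbdd : ∀ x, BddAbove (range fun i : s => g i x))
    (hsup : Continuous fun x => ⨆ i : s, g i x) {ζ : ℝ} (hζ : 0 < ζ) :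
    ∃ φ : α → ι, Measurable φ ∧ (∀ x, φ x ∈ s) ∧ (∀ x y, g (φ y) x ≤ g (φ x) x) ∧
      ∀ x ∈ K, ∀ i ∈ s, g i x - ζ ≤ g (φ x) x := by
  classical
  have := hs.to_subtype
  obtain ⟨F, hF⟩ := hK.elim_finite_subcover (fun i : s => {x | (⨆ j : s, g j x) - ζ < g i x})
    (fun i => isOpen_lt (hsup.sub continuous_const) (hg i))
    (fun x _ => mem_iUnion.2 (exists_lt_of_lt_ciSup (sub_lt_self _ hζ)))
  obtain ⟨i₀, hi₀⟩ := hs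
  obtain ⟨φ, hφ_meas, hφ⟩ := exists_measurable_forall_le_finset (insert i₀ (F.image Subtype.val))
    (Finset.insert_nonempty _ _) g fun i _ => (hg i).measurable
  have hφ_mem : ∀ x, φ x ∈ s := fun x => by
    rcases Finset.mem_insert.1 (hφ x).1 with h | h
    · exact h ▸ hi₀
    · obtain ⟨i, -, hi⟩ := Finset.mem_image.1 h
      exact hi ▸ i.2
  refine ⟨φ, hφ_meas, hφ_mem, fun x y => (hφ x).2 _ (hφ y).1, fun x hx i hi => ?_⟩
  obtain ⟨j, hjF, hj⟩ := mem_iUnion₂.1 (hF hx)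
  calc g i x - ζ ≤ (⨆ j : s, g j x) - ζ := sub_le_sub_right (le_ciSup (hbdd x) ⟨i, hi⟩) _
    _ ≤ g j x := le_of_lt hj
    _ ≤ g (φ x) x := (hφ x).2 j (Finset.mem_insert_of_mem (Finset.mem_image_of_mem _ hjF))

theorem abs_ciSup_sub_ciSup_le {ι α : Type*} [Nonempty ι] {f : ι → α → ℝ}
    (hf : ∀ x, BddAbove (range fun i => f i x)) {x y : α} {C : ℝ}
    (h : ∀ i, |f i x - f i y| ≤ C) : |(⨆ i, f i x) - ⨆ i, f i y| ≤ C := by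
  have key : ∀ x y, (∀ i, f i x - f i y ≤ C) → (⨆ i, f i x) - ⨆ i, f i y ≤ C := fun x y h =>
    sub_le_iff_le_add'.2 <| ciSup_le fun i =>
      (sub_le_iff_le_add'.1 (h i)).trans (add_le_add_left (le_ciSup (hf y) i) C)
  exact abs_sub_le_iff.2
    ⟨key x y fun i => (abs_sub_le_iff.1 (h i)).1, key y x fun i => (abs_sub_le_iff.1 (h i)).2⟩

theorem continuous_of_abs_sub_le_mul_sum_abs {ι : Type*} [Fintype ι] {f : (ι → ℝ) → ℝ} {L : ℝ}
    (hf : ∀ s t, |f s - f t| ≤ L * ∑ j, |s j - t j|) : Continuous f := by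
  refine continuous_iff_continuousAt.2 fun t => tendsto_iff_norm_sub_tendsto_zero.2 ?_
  have hbound : Tendsto (fun s : ι → ℝ => L * ∑ j, |s j - t j|) (𝓝 t) (𝓝 0) := by
    have : Continuous fun s : ι → ℝ => L * ∑ j, |s j - t j| := by fun_prop
    simpa using this.tendsto t
  exact squeeze_zero (fun _ => norm_nonneg _) (fun s => hf s t) hbound

theorem lintegral_ofReal_le_of_measure_lt_le {α : Type*} [MeasurableSpace α] {μ ν : Measure α}
    {g h : α → ℝ} {R ε : ℝ} (hg : Measurable g) (hg0 : 0 ≤ g) (hgR : ∀ x, g x ≤ R)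
    (hh : Measurable h) (hh0 : 0 ≤ h) (hε : 0 ≤ ε)
    (htail : ∀ r ∈ Ioc 0 R, μ {x | r < g x} ≤ ν {x | r < h x} + ENNReal.ofReal ε) :
    ∫⁻ x, ENNReal.ofReal (g x) ∂μ ≤ ∫⁻ x, ENNReal.ofReal (h x) ∂ν + ENNReal.ofReal (R * ε) := by
  have htail' : ∀ r ∈ Ioi (0 : ℝ), μ {x | r < g x} ≤
      ν {x | r < h x} + (Ioc 0 R).indicator (fun _ => ENNReal.ofReal ε) r := by
    intro r hr
    by_cases hrR : r ≤ R
    · rw [indicator_of_mem (show r ∈ Ioc 0 R from ⟨hr, hrR⟩)]; exact htail r ⟨hr, hrR⟩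
    · have : {x | r < g x} = ∅ := eq_empty_of_forall_notMem fun x hx =>
        hrR ((le_of_lt hx).trans (hgR x))
      simp [this]
  rw [lintegral_eq_lintegral_meas_lt μ (.of_forall hg0) hg.aemeasurable,
    lintegral_eq_lintegral_meas_lt ν (.of_forall hh0) hh.aemeasurable]
  calc ∫⁻ r in Ioi 0, μ {x | r < g x}
      ≤ ∫⁻ r in Ioi 0, ν {x | r < h x} + (Ioc 0 R).indicator (fun _ => ENNReal.ofReal ε) r :=
        setLIntegral_mono' measurableSet_Ioi htail'
    _ = _ := by
      rw [lintegral_add_right _ (measurable_const.indicator measurableSet_Ioc),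
        lintegral_indicator_const measurableSet_Ioc, Measure.restrict_apply measurableSet_Ioc,
        inter_eq_self_of_subset_left Ioc_subset_Ioi_self, Real.volume_Ioc, sub_zero,
        ← ENNReal.ofReal_mul hε, mul_comm]

theorem integral_le_integral_add_of_prokhorov {α : Type*} [MeasurableSpace α]
    {μ ν : Measure α} {near : α → α → Prop} {g h : α → ℝ} {R ε : ℝ}
    (hg : Measurable g) (hg0 : 0 ≤ g) (hgR : ∀ x, g x ≤ R) (hR : 0 ≤ R)
    (hh : Measurable h) (hh0 : 0 ≤ h) (hh_int : Integrable h ν) (hε : 0 ≤ ε)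
    (hprok : ∀ A, MeasurableSet A → μ A ≤ ν {x | ∃ y ∈ A, near x y} + ENNReal.ofReal ε)
    (hnear : ∀ᵐ x ∂ν, ∀ y, near x y → g y ≤ h x) :
    ∫ x, g x ∂μ ≤ ∫ x, h x ∂ν + R * ε := by
  have hnbhd : ∀ r, {x | ∃ y ∈ {y | r < g y}, near x y} ≤ᵐ[ν] {x | r < h x} := fun r => by
    filter_upwards [hnear] with x hx
    rintro ⟨y, hy, hxy⟩
    exact lt_of_lt_of_le hy (hx y hxy)
  have hlint := lintegral_ofReal_le_of_measure_lt_le hg hg0 hgR hh hh0 hε fun r _ =>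
    (hprok _ (hg measurableSet_Ioi)).trans (add_le_add_left (measure_mono_ae (hnbhd r)) _)
  rw [← ofReal_integral_eq_lintegral_ofReal hh_int (.of_forall hh0),
    ← ENNReal.ofReal_add (integral_nonneg hh0) (mul_nonneg hR hε)] at hlint
  rw [integral_eq_lintegral_of_nonneg_ae (.of_forall hg0) hg.aestronglyMeasurable]
  exact ENNReal.toReal_le_of_le_ofReal (add_nonneg (integral_nonneg hh0) (mul_nonneg hR hε)) hlint

namespace OneBidder

theorem measurable_some {α : Type*} [MeasurableSpace α] : Measurable (some : α → Option α) :=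
  fun _ hs => hs

theorem measurable_option {α β : Type*} [MeasurableSpace α] [MeasurableSpace β]
    {f : Option α → β} (hf : Measurable fun a => f (some a)) : Measurable f :=
  fun _ hs => hf hs

variable {m : ℕ} {H L : ℝ} {v : (Fin m → ℝ) → (Fin m → Bool) → ℝ}

def box (m : ℕ) (H : ℝ) : Set (Fin m → ℝ) := {t | ∀ j, t j ∈ Icc 0 H}

theorem box_eq_pi : box m H = univ.pi fun _ => Icc 0 H := by
  ext t; simp only [box, mem_ofPred_eq, mem_univ_pi]

theorem isCompact_box : IsCompact (box m H) :=
  box_eq_pi ▸ isCompact_univ_pi fun _ => isCompact_Icc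

theorem measurableSet_box : MeasurableSet (box m H) :=
  box_eq_pi ▸ .univ_pi fun _ => measurableSet_Icc

theorem zero_mem_box (hH : 0 ≤ H) : (0 : Fin m → ℝ) ∈ box m H := fun _ => ⟨le_rfl, hH⟩

theorem sum_abs_sub_le_of_mem_box {s t : Fin m → ℝ} (hs : s ∈ box m H) (ht : t ∈ box m H) :
    ∑ j, |s j - t j| ≤ m * H := by
  calc ∑ j, |s j - t j| ≤ ∑ _j : Fin m, H :=
        Finset.sum_le_sum fun j _ => abs_sub_le_iff.2
          ⟨by linarith [(hs j).2, (ht j).1], by linarith [(hs j).1, (ht j).2]⟩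
    _ = m * H := by simp

theorem ae_mem_box {μ : Measure (Fin m → ℝ)} [IsProbabilityMeasure μ] (hμ : suppBox H μ) :
    ∀ᵐ t ∂μ, t ∈ box m H :=
  mem_ae_iff.2 ((prob_compl_eq_zero_iff measurableSet_box).2 hμ)

namespace Mech

def value (v : (Fin m → ℝ) → (Fin m → Bool) → ℝ) (N : Mech m) (t b : Fin m → ℝ) : ℝ :=
  ∑ x, N.allocProb (some b) x * v t x

noncomputable def posPay (N : Mech m) (b : Fin m → ℝ) : ℝ := max (N.pay (some b)) 0

noncomputable def discountedUtil (v : (Fin m → ℝ) → (Fin m → Bool) → ℝ) (η : ℝ) (N : Mech m)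
    (t b : Fin m → ℝ) : ℝ :=
  N.value v t b - (1 - η) * N.posPay b

theorem util_some (N : Mech m) (t b : Fin m → ℝ) :
    util v N t (some b) = N.value v t b - N.pay (some b) := rfl

theorem value_le_of_forall_le (N : Mech m) {t : Fin m → ℝ} (b : Fin m → ℝ) {C : ℝ}
    (hC : ∀ x, v t x ≤ C) : N.value v t b ≤ C :=
  calc N.value v t b ≤ ∑ x, N.allocProb (some b) x * C :=
        Finset.sum_le_sum fun x _ => mul_le_mul_of_nonneg_left (hC x) (N.allocProb_nonneg _ x)
    _ = C := by rw [← Finset.sum_mul, N.allocProb_sum_one, one_mul]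

theorem value_nonneg (N : Mech m) {t : Fin m → ℝ} (b : Fin m → ℝ) (h : ∀ x, 0 ≤ v t x) :
    0 ≤ N.value v t b :=
  Finset.sum_nonneg fun x _ => mul_nonneg (N.allocProb_nonneg _ x) (h x)

theorem abs_value_sub_value_le (hlip : ∀ t t' x, |v t x - v t' x| ≤ L * ∑ j, |t j - t' j|)
    (N : Mech m) (t t' b : Fin m → ℝ) :
    |N.value v t b - N.value v t' b| ≤ L * ∑ j, |t j - t' j| := by
  rw [value, value, ← Finset.sum_sub_distrib]
  calc |∑ x, (N.allocProb (some b) x * v t x - N.allocProb (some b) x * v t' x)|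
      ≤ ∑ x, N.allocProb (some b) x * |v t x - v t' x| := by
        refine (Finset.abs_sum_le_sum_abs _ _).trans_eq (Finset.sum_congr rfl fun x _ => ?_)
        rw [← mul_sub, abs_mul, abs_of_nonneg (N.allocProb_nonneg _ x)]
    _ ≤ L * ∑ j, |t j - t' j| := value_le_of_forall_le (v := fun t x => |v t x - v t' x|) N b
        fun x => hlip t t' x

theorem measurable_posPay (N : Mech m) : Measurable N.posPay :=
  (N.meas_pay.comp measurable_some).max measurable_const

theorem posPay_nonneg (N : Mech m) (b : Fin m → ℝ) : 0 ≤ N.posPay b := le_max_right _ _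

theorem posPay_le_value {N : Mech m} (hIR : IsIR H v N)
    (hv0 : ∀ t x, (∀ j, t j ∈ Icc (0:ℝ) H) → 0 ≤ v t x) {t : Fin m → ℝ} (ht : t ∈ box m H) :
    N.posPay t ≤ N.value v t t :=
  max_le (sub_nonneg.1 (hIR t ht)) (N.value_nonneg t (hv0 t · ht))

theorem posPay_le {N : Mech m} (hIR : IsIR H v N)
    (hv0 : ∀ t x, (∀ j, t j ∈ Icc (0:ℝ) H) → 0 ≤ v t x)
    (hv1 : ∀ t x, (∀ j, t j ∈ Icc (0:ℝ) H) → v t x ≤ m * L * H)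
    {t : Fin m → ℝ} (ht : t ∈ box m H) : N.posPay t ≤ m * L * H :=
  (posPay_le_value hIR hv0 ht).trans (N.value_le_of_forall_le t (hv1 t · ht))

theorem indicator_posPay_le {N : Mech m} (hIR : IsIR H v N)
    (hv0 : ∀ t x, (∀ j, t j ∈ Icc (0:ℝ) H) → 0 ≤ v t x)
    (hv1 : ∀ t x, (∀ j, t j ∈ Icc (0:ℝ) H) → v t x ≤ m * L * H) (hK : 0 ≤ m * L * H)
    (t : Fin m → ℝ) : (box m H).indicator N.posPay t ≤ m * L * H := by
  by_cases ht : t ∈ box m H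
  · rw [indicator_of_mem ht]; exact posPay_le hIR hv0 hv1 ht
  · rw [indicator_of_notMem ht]; exact hK

theorem util_self_le_util_self_add {N : Mech m} (hIC : IsIC H v N)
    (hlip : ∀ t t' x, |v t x - v t' x| ≤ L * ∑ j, |t j - t' j|) {t t' : Fin m → ℝ}
    (ht : t ∈ box m H) (ht' : t' ∈ box m H) :
    util v N t' (some t') ≤ util v N t (some t) + L * ∑ j, |t' j - t j| := by
  have hval := (abs_le.1 (N.abs_value_sub_value_le hlip t' t t')).2
  have hIC' := hIC t t' ht ht'
  rw [util_some, util_some] at hIC' ⊢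
  linarith

theorem posPay_le_posPay_add {N : Mech m} (hIC : IsIC H v N)
    (hlip : ∀ t t' x, |v t x - v t' x| ≤ L * ∑ j, |t j - t' j|) (hL : 0 ≤ L) {η ζ : ℝ}
    (hη : 0 < η) (hζ : 0 ≤ ζ) {t t' b : Fin m → ℝ} (ht : t ∈ box m H) (ht' : t' ∈ box m H)
    (hb : b ∈ box m H) (hnear : N.discountedUtil v η t' t - ζ ≤ N.discountedUtil v η t' b) :
    N.posPay t ≤ N.posPay b + (2 * L * ∑ j, |t' j - t j| + ζ) / η := by
  set δ := ∑ j, |t' j - t j|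
  have hδ : 0 ≤ δ := Finset.sum_nonneg fun _ _ => abs_nonneg _
  rcases le_or_gt (N.pay (some t)) 0 with hpay | hpay
  · rw [posPay, max_eq_right hpay]
    exact add_nonneg (N.posPay_nonneg b) (by positivity)
  have hval := (abs_le.1 (N.abs_value_sub_value_le hlip t' t t)).1
  -- IC of `N` at `t'` caps the utility of `b`'s entry; IC at `t` with Lipschitz values bounds
  -- that of `t`'s entry from below.
  have hIC_b := hIC t' b ht' hb
  have hutil := util_self_le_util_self_add hIC hlip ht ht'
  have hpay_b : N.pay (some b) ≤ N.posPay b := le_max_left _ _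
  rw [util_some, util_some] at hIC_b hutil
  rw [discountedUtil, discountedUtil, posPay, max_eq_left hpay.le] at hnear
  rw [posPay, max_eq_left hpay.le, ← sub_le_iff_le_add', le_div_iff₀ hη]
  linarith

def null (m : ℕ) : Mech m where
  allocProb _ x := if x = fun _ => false then 1 else 0
  pay _ := 0
  allocProb_nonneg _ _ := by split_ifs <;> norm_num
  allocProb_sum_one _ := by simp
  optOut := ⟨rfl, rfl⟩
  meas_allocProb _ := measurable_const
  meas_pay := measurable_const

theorem null_isIC : IsIC H v (null m) := fun _ _ _ _ => le_rfl

theorem null_isIR (hv0 : ∀ t x, (∀ j, t j ∈ Icc (0:ℝ) H) → 0 ≤ v t x) : IsIR H v (null m) :=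
  fun t ht => by simpa [util, null] using hv0 t _ ht

theorem rev_null (D : Measure (Fin m → ℝ)) : Rev (null m) D = 0 := by simp [Rev, null]

noncomputable def discountedMenu (N : Mech m) (η ζ : ℝ) (φ : (Fin m → ℝ) → Fin m → ℝ)
    (hφ : Measurable φ) : Mech m where
  allocProb b x := b.elim (if x = fun _ => false then 1 else 0) fun t => N.allocProb (some (φ t)) x
  pay b := b.elim 0 fun t => (1 - η) * N.posPay (φ t) - ζ
  allocProb_nonneg b x := by
    cases b
    · dsimp only [Option.elim]; split_ifs <;> norm_num
    · exact N.allocProb_nonneg _ x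
  allocProb_sum_one b := by
    cases b
    · simp
    · exact N.allocProb_sum_one _
  optOut := ⟨rfl, rfl⟩
  meas_allocProb x := measurable_option ((N.meas_allocProb x).comp (measurable_some.comp hφ))
  meas_pay := measurable_option (((N.measurable_posPay.comp hφ).const_mul _).sub_const ζ)

theorem util_discountedMenu (N : Mech m) (η ζ : ℝ) {φ : (Fin m → ℝ) → Fin m → ℝ}
    (hφ : Measurable φ) (t b : Fin m → ℝ) :
    util v (N.discountedMenu η ζ φ hφ) t (some b) = N.discountedUtil v η t (φ b) + ζ := by
  change N.value v t (φ b) - ((1 - η) * N.posPay (φ b) - ζ) = _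
  rw [discountedUtil]; ring

theorem discountedUtil_self_nonneg {N : Mech m} (hIR : IsIR H v N)
    (hv0 : ∀ t x, (∀ j, t j ∈ Icc (0:ℝ) H) → 0 ≤ v t x) {η : ℝ} (hη : 0 ≤ η)
    {t : Fin m → ℝ} (ht : t ∈ box m H) : 0 ≤ N.discountedUtil v η t t := by
  have := posPay_le_value hIR hv0 ht
  have := N.posPay_nonneg t
  rw [discountedUtil]; nlinarith

theorem abs_discountedUtil_sub_le (hlip : ∀ t t' x, |v t x - v t' x| ≤ L * ∑ j, |t j - t' j|)
    (N : Mech m) (η : ℝ) (t t' b : Fin m → ℝ) :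
    |N.discountedUtil v η t b - N.discountedUtil v η t' b| ≤ L * ∑ j, |t j - t' j| := by
  rw [discountedUtil, discountedUtil, sub_sub_sub_cancel_right]
  exact N.abs_value_sub_value_le hlip t t' b

theorem exists_near_optimal_selection (hH : 0 ≤ H)
    (hlip : ∀ t t' x, |v t x - v t' x| ≤ L * ∑ j, |t j - t' j|) (N : Mech m) {η ζ : ℝ}
    (hη1 : η ≤ 1) (hζ : 0 < ζ) :
    ∃ φ : (Fin m → ℝ) → Fin m → ℝ, Measurable φ ∧ (∀ t, φ t ∈ box m H) ∧
      (∀ t t', N.discountedUtil v η t (φ t') ≤ N.discountedUtil v η t (φ t)) ∧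
      ∀ t ∈ box m H, ∀ b ∈ box m H,
        N.discountedUtil v η t b - ζ ≤ N.discountedUtil v η t (φ t) := by
  have hbdd : ∀ t, BddAbove (range fun b : box m H => N.discountedUtil v η t b) := by
    intro t
    set C := Finset.univ.sup' Finset.univ_nonempty (v t)
    refine ⟨C, ?_⟩
    rintro _ ⟨b, rfl⟩
    have := mul_nonneg (sub_nonneg.2 hη1) (N.posPay_nonneg b)
    have : N.value v t b ≤ C :=
      N.value_le_of_forall_le b fun x => Finset.le_sup' (v t) (Finset.mem_univ x)
    change N.value v t b - (1 - η) * N.posPay b ≤ C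
    linarith
  have : Nonempty (box m H) := ⟨⟨0, zero_mem_box hH⟩⟩
  exact exists_measurable_near_argmax isCompact_box ⟨0, zero_mem_box hH⟩
    (fun b => continuous_of_abs_sub_le_mul_sum_abs fun t t' =>
      N.abs_discountedUtil_sub_le hlip η t t' b) hbdd
    (continuous_of_abs_sub_le_mul_sum_abs fun t t' =>
      abs_ciSup_sub_ciSup_le hbdd fun b => N.abs_discountedUtil_sub_le hlip η t t' b) hζ

end Mech

theorem OPT_le_of_forall_rev_le {D : Measure (Fin m → ℝ)}
    (hv0 : ∀ t x, (∀ j, t j ∈ Icc (0:ℝ) H) → 0 ≤ v t x) {B : ℝ}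
    (hB : ∀ N : Mech m, IsIC H v N → IsIR H v N → Rev N D ≤ B) : OPT H v D ≤ B :=
  csSup_le ⟨_, Mech.null m, Mech.null_isIC, Mech.null_isIR hv0, rfl⟩
    (by rintro _ ⟨N, hIC, hIR, rfl⟩; exact hB N hIC hIR)

section Revenue

variable {D : Measure (Fin m → ℝ)} [IsProbabilityMeasure D]

theorem rev_le_of_isIR (hD : suppBox H D)
    (hv1 : ∀ t x, (∀ j, t j ∈ Icc (0:ℝ) H) → v t x ≤ m * L * H)
    (hK : 0 ≤ m * L * H) {N : Mech m} (hIR : IsIR H v N) : Rev N D ≤ m * L * H := by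
  by_cases hint : Integrable (fun t => N.pay (some t)) D
  · calc Rev N D ≤ ∫ _, m * L * H ∂D := integral_mono_ae hint (integrable_const _) <| by
          filter_upwards [ae_mem_box hD] with t ht
          exact (sub_nonneg.1 (hIR t ht)).trans (N.value_le_of_forall_le t (hv1 t · ht))
      _ = m * L * H := by simp
  · rw [Rev, integral_undef hint]; exact hK

theorem rev_le_integral_indicator_posPay (hD : suppBox H D)
    (hv0 : ∀ t x, (∀ j, t j ∈ Icc (0:ℝ) H) → 0 ≤ v t x)
    (hv1 : ∀ t x, (∀ j, t j ∈ Icc (0:ℝ) H) → v t x ≤ m * L * H) (hK : 0 ≤ m * L * H)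
    {N : Mech m} (hIR : IsIR H v N) : Rev N D ≤ ∫ t, (box m H).indicator N.posPay t ∂D := by
  have hnonneg : 0 ≤ (box m H).indicator N.posPay := indicator_nonneg fun t _ => N.posPay_nonneg t
  by_cases hint : Integrable (fun t => N.pay (some t)) D
  · refine integral_mono_ae hint (.of_bound
      (N.measurable_posPay.indicator measurableSet_box).aestronglyMeasurable _ <| .of_forall
        fun t => by
          rw [Real.norm_of_nonneg (hnonneg t)]; exact Mech.indicator_posPay_le hIR hv0 hv1 hK t) ?_
    filter_upwards [ae_mem_box hD] with t ht
    rw [indicator_of_mem ht]; exact le_max_left _ _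
  · rw [Rev, integral_undef hint]; exact integral_nonneg hnonneg

theorem bddAbove_rev (hD : suppBox H D)
    (hv1 : ∀ t x, (∀ j, t j ∈ Icc (0:ℝ) H) → v t x ≤ m * L * H) (hK : 0 ≤ m * L * H) :
    BddAbove {r | ∃ N : Mech m, IsIC H v N ∧ IsIR H v N ∧ r = Rev N D} :=
  ⟨m * L * H, by rintro _ ⟨N, -, hIR, rfl⟩; exact rev_le_of_isIR hD hv1 hK hIR⟩

theorem rev_le_OPT (hD : suppBox H D)
    (hv1 : ∀ t x, (∀ j, t j ∈ Icc (0:ℝ) H) → v t x ≤ m * L * H) (hK : 0 ≤ m * L * H)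
    {N : Mech m} (hIC : IsIC H v N) (hIR : IsIR H v N) : Rev N D ≤ OPT H v D :=
  le_csSup (bddAbove_rev hD hv1 hK) ⟨N, hIC, hIR, rfl⟩

theorem OPT_nonneg (hD : suppBox H D) (hv0 : ∀ t x, (∀ j, t j ∈ Icc (0:ℝ) H) → 0 ≤ v t x)
    (hv1 : ∀ t x, (∀ j, t j ∈ Icc (0:ℝ) H) → v t x ≤ m * L * H) (hK : 0 ≤ m * L * H) :
    0 ≤ OPT H v D :=
  Mech.rev_null D ▸ rev_le_OPT hD hv1 hK Mech.null_isIC (Mech.null_isIR hv0)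

theorem OPT_le (hD : suppBox H D)
    (hv0 : ∀ t x, (∀ j, t j ∈ Icc (0:ℝ) H) → 0 ≤ v t x)
    (hv1 : ∀ t x, (∀ j, t j ∈ Icc (0:ℝ) H) → v t x ≤ m * L * H) (hK : 0 ≤ m * L * H) :
    OPT H v D ≤ m * L * H :=
  OPT_le_of_forall_rev_le hv0 fun _ _ hIR => rev_le_of_isIR hD hv1 hK hIR

end Revenue

/-- `(2 L δ + ζ) / η` is the price loss of the discounted menu at `ℓ¹`-distance `δ ≤ min ε (m H)`,
`m L H ε` the maximal price times the Prokhorov mass defect, `ζ` the rebate. -/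
noncomputable def robustLoss (m : ℕ) (H L η ζ ε : ℝ) : ℝ :=
  (2 * L * min ε (m * H) + ζ) / η + m * L * H * ε + ζ

theorem one_sub_mul_rev_sub_robustLoss_le_rev_discountedMenu (hH : 0 ≤ H) (hL : 0 ≤ L)
    (hv0 : ∀ t x, (∀ j, t j ∈ Icc (0:ℝ) H) → 0 ≤ v t x)
    (hv1 : ∀ t x, (∀ j, t j ∈ Icc (0:ℝ) H) → v t x ≤ m * L * H)
    (hlip : ∀ t t' x, |v t x - v t' x| ≤ L * ∑ j, |t j - t' j|)
    {N : Mech m} (hIC : IsIC H v N) (hIR : IsIR H v N) {η ζ : ℝ} (hη : 0 < η) (hη1 : η ≤ 1)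
    (hζ : 0 ≤ ζ) {φ : (Fin m → ℝ) → Fin m → ℝ} (hφ : Measurable φ) (hφ_box : ∀ t, φ t ∈ box m H)
    (hφ_near : ∀ t ∈ box m H, ∀ b ∈ box m H,
      N.discountedUtil v η t b - ζ ≤ N.discountedUtil v η t (φ t))
    {μ ν : Measure (Fin m → ℝ)} [IsProbabilityMeasure μ] [IsProbabilityMeasure ν]
    (hμ : suppBox H μ) (hν : suppBox H ν) {ε : ℝ} (hε : 0 ≤ ε)
    (hprok : ∀ A, MeasurableSet A →
      μ A ≤ ν {x | ∃ y ∈ A, ∑ j, |x j - y j| < ε} + ENNReal.ofReal ε) :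
    (1 - η) * Rev N μ - robustLoss m H L η ζ ε ≤ Rev (N.discountedMenu η ζ φ hφ) ν := by
  have hK : 0 ≤ m * L * H := by positivity
  set q := N.posPay
  set E := (2 * L * min ε (m * H) + ζ) / η
  have hE : 0 ≤ E := div_nonneg (by
    have := le_min hε (by positivity : (0:ℝ) ≤ m * H); positivity) hη.le
  have hqφ_meas : Measurable fun t => q (φ t) := N.measurable_posPay.comp hφ
  have hqφ_int : Integrable (fun t => q (φ t)) ν :=
    .of_bound hqφ_meas.aestronglyMeasurable _ <| .of_forall fun t => by
      rw [Real.norm_of_nonneg (N.posPay_nonneg _)]; exact Mech.posPay_le hIR hv0 hv1 (hφ_box t)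
  have hnear : ∀ᵐ x ∂ν, ∀ y, ∑ j, |x j - y j| < ε → (box m H).indicator q y ≤ q (φ x) + E := by
    filter_upwards [ae_mem_box hν] with x hx y hxy
    by_cases hy : y ∈ box m H
    · rw [indicator_of_mem hy]
      refine (Mech.posPay_le_posPay_add hIC hlip hL hη hζ hy hx (hφ_box x)
        (hφ_near x hx y hy)).trans (add_le_add_right ?_ _)
      refine div_le_div_of_nonneg_right ?_ hη.le
      gcongr
      exact le_min hxy.le (sum_abs_sub_le_of_mem_box hx hy)
    · rw [indicator_of_notMem hy]; exact add_nonneg (N.posPay_nonneg _) hE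
  have htransfer := integral_le_integral_add_of_prokhorov
    (N.measurable_posPay.indicator measurableSet_box)
    (indicator_nonneg fun t _ => N.posPay_nonneg t) (Mech.indicator_posPay_le hIR hv0 hv1 hK) hK
    (hqφ_meas.add_const E) (fun t => add_nonneg (N.posPay_nonneg _) hE)
    (hqφ_int.add (integrable_const E)) hε hprok hnear
  have hrev_new : Rev (N.discountedMenu η ζ φ hφ) ν = (1 - η) * ∫ t, q (φ t) ∂ν - ζ := by
    change ∫ t, ((1 - η) * q (φ t) - ζ) ∂ν = _
    rw [integral_sub (hqφ_int.const_mul _) (integrable_const ζ), integral_const_mul]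
    simp
  rw [integral_add hqφ_int (integrable_const E)] at htransfer
  simp only [integral_const, probReal_univ, smul_eq_mul, one_mul] at htransfer
  rw [hrev_new, robustLoss]
  have := mul_le_mul_of_nonneg_left
    ((rev_le_integral_indicator_posPay hμ hv0 hv1 hK hIR).trans htransfer) (sub_nonneg.2 hη1)
  nlinarith [mul_nonneg hK hε]

theorem exists_robust_mech (hH : 0 ≤ H) (hL : 0 ≤ L)
    (hv0 : ∀ t x, (∀ j, t j ∈ Icc (0:ℝ) H) → 0 ≤ v t x)
    (hv1 : ∀ t x, (∀ j, t j ∈ Icc (0:ℝ) H) → v t x ≤ m * L * H)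
    (hlip : ∀ t t' x, |v t x - v t' x| ≤ L * ∑ j, |t j - t' j|)
    {N : Mech m} (hIC : IsIC H v N) (hIR : IsIR H v N) {η ζ : ℝ} (hη : 0 < η) (hη1 : η ≤ 1)
    (hζ : 0 < ζ) :
    ∃ N' : Mech m, IsIC H v N' ∧ IsIR H v N' ∧
      ∀ (μ ν : Measure (Fin m → ℝ)) [IsProbabilityMeasure μ] [IsProbabilityMeasure ν],
        suppBox H μ → suppBox H ν → ∀ ε, 0 ≤ ε →
        (∀ ε' > ε, ∀ A, MeasurableSet A →
          μ A ≤ ν {x | ∃ y ∈ A, ∑ j, |x j - y j| < ε'} + ENNReal.ofReal ε') →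
        (1 - η) * Rev N μ - robustLoss m H L η ζ ε ≤ Rev N' ν := by
  obtain ⟨φ, hφ, hφ_box, hφ_max, hφ_near⟩ := N.exists_near_optimal_selection hH hlip hη1 hζ
  refine ⟨N.discountedMenu η ζ φ hφ, fun t t' _ _ => ?_, fun t ht => ?_, ?_⟩
  · rw [Mech.util_discountedMenu, Mech.util_discountedMenu]
    exact add_le_add_left (hφ_max t t') ζ
  · rw [Mech.util_discountedMenu]
    linarith [hφ_near t ht t ht, Mech.discountedUtil_self_nonneg hIR hv0 hη.le ht]
  · intro μ ν _ _ hμ hν ε hε hprok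
    have hcont : Continuous fun ε' => (1 - η) * Rev N μ - robustLoss m H L η ζ ε' := by
      unfold robustLoss; fun_prop
    exact le_of_tendsto ((hcont.tendsto ε).mono_left nhdsWithin_le_nhds)
      (eventually_nhdsWithin_of_forall (s := Ioi ε) fun ε' hε' =>
        one_sub_mul_rev_sub_robustLoss_le_rev_discountedMenu hH hL hv0 hv1 hlip hIC hIR hη hη1
          hζ.le hφ hφ_box hφ_near hμ hν (hε.trans (le_of_lt hε')) (hprok ε' hε'))

theorem one_sub_mul_OPT_sub_le_OPT {μ ν : Measure (Fin m → ℝ)} [IsProbabilityMeasure μ]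
    (hμ : suppBox H μ) (hv0 : ∀ t x, (∀ j, t j ∈ Icc (0:ℝ) H) → 0 ≤ v t x)
    (hv1 : ∀ t x, (∀ j, t j ∈ Icc (0:ℝ) H) → v t x ≤ m * L * H) (hK : 0 ≤ m * L * H)
    {η e : ℝ} (hη1 : η < 1)
    (hrobust : ∀ N : Mech m, IsIC H v N → IsIR H v N →
      ∃ N' : Mech m, IsIC H v N' ∧ IsIR H v N' ∧ (1 - η) * Rev N ν - e ≤ Rev N' μ) :
    (1 - η) * OPT H v ν - e ≤ OPT H v μ := by
  have h1η : 0 < 1 - η := sub_pos.2 hη1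
  have hOPT : OPT H v ν ≤ (OPT H v μ + e) / (1 - η) :=
    OPT_le_of_forall_rev_le hv0 fun N hIC hIR => by
      obtain ⟨N', hIC', hIR', hrev⟩ := hrobust N hIC hIR
      rw [le_div_iff₀ h1η]
      linarith [rev_le_OPT hμ hv1 hK hIC' hIR']
  rw [le_div_iff₀ h1η] at hOPT
  linarith

theorem robustLoss_nonneg (hH : 0 ≤ H) (hL : 0 ≤ L) {η ζ ε : ℝ} (hη : 0 < η) (hζ : 0 ≤ ζ)
    (hε : 0 ≤ ε) : 0 ≤ robustLoss m H L η ζ ε := by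
  have := le_min hε (by positivity : (0 : ℝ) ≤ m * H)
  unfold robustLoss; positivity

theorem exists_robust_approx_mech (hH : 0 ≤ H) (hL : 0 ≤ L)
    (hv0 : ∀ t x, (∀ j, t j ∈ Icc (0:ℝ) H) → 0 ≤ v t x)
    (hv1 : ∀ t x, (∀ j, t j ∈ Icc (0:ℝ) H) → v t x ≤ m * L * H)
    (hlip : ∀ t t' x, |v t x - v t' x| ≤ L * ∑ j, |t j - t' j|)
    {D : Measure (Fin m → ℝ)} [IsProbabilityMeasure D] (hD : suppBox H D)
    {M : Mech m} (hMIC : IsIC H v M) (hMIR : IsIR H v M) {c : ℝ} (hc : 0 ≤ c) (hc1 : c ≤ 1)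
    (hM : c * OPT H v D ≤ Rev M D) {η ζ ε : ℝ} (hη : 0 < η) (hη1 : η < 1) (hζ : 0 < ζ)
    (hε : 0 ≤ ε) :
    ∃ Mhat : Mech m, IsIC H v Mhat ∧ IsIR H v Mhat ∧
      ∀ (Dhat : Measure (Fin m → ℝ)) [IsProbabilityMeasure Dhat], suppBox H Dhat →
        ProkhorovLe D Dhat ε →
        c * (1 - 2 * η) * OPT H v Dhat - 2 * robustLoss m H L η ζ ε ≤ Rev Mhat Dhat := by
  have hK : 0 ≤ m * L * H := by positivity
  have hrobust := fun (N : Mech m) (hIC : IsIC H v N) (hIR : IsIR H v N) =>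
    exists_robust_mech hH hL hv0 hv1 hlip hIC hIR hη hη1.le hζ
  obtain ⟨Mhat, hIC, hIR, hMhat⟩ := hrobust M hMIC hMIR
  refine ⟨Mhat, hIC, hIR, fun Dhat _ hDhat hprok => ?_⟩
  have hrev := hMhat D Dhat hD hDhat ε hε fun ε' h A hA => (hprok ε' h A hA).1
  have hOPT := one_sub_mul_OPT_sub_le_OPT hD hv0 hv1 hK hη1 fun N hIC hIR =>
    let ⟨N', hIC', hIR', hN'⟩ := hrobust N hIC hIR
    ⟨N', hIC', hIR', hN' Dhat D hDhat hD ε hε fun ε' h A hA => (hprok ε' h A hA).2⟩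
  have he := robustLoss_nonneg (m := m) hH hL hη hζ.le hε
  have hX := OPT_nonneg hDhat hv0 hv1 hK
  have h1η : 0 ≤ 1 - η := by linarith
  have h1 := mul_le_mul_of_nonneg_left hM h1η
  have h2 := mul_le_mul_of_nonneg_left hOPT (mul_nonneg h1η hc)
  have h3 : (1 - η) * c * robustLoss m H L η ζ ε ≤ robustLoss m H L η ζ ε :=
    mul_le_of_le_one_left he (by nlinarith)
  nlinarith [mul_nonneg (mul_nonneg hc (sq_nonneg η)) hX]

theorem min_le_mul_sqrt {m H ε : ℝ} (hm : 1 ≤ m) (hH : 0 ≤ H) (hε : 0 ≤ ε) :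
    min ε (m * H) ≤ m * √(H * ε) := by
  have hsq := Real.sq_sqrt (mul_nonneg hH hε)
  have hmin : min ε (m * H) ^ 2 ≤ ε * (m * H) := by
    rw [sq]; exact mul_le_mul (min_le_left _ _) (min_le_right _ _) (by positivity) hε
  refine (pow_le_pow_iff_left₀ (le_min hε (by positivity)) (by positivity) two_ne_zero).1 ?_
  rw [mul_pow, hsq]
  nlinarith [mul_nonneg hH hε]

theorem robustLoss_le (hm : 1 ≤ m) (hH : 0 ≤ H) (hL : 0 ≤ L) {ε κ : ℝ} (hε : 0 ≤ ε)
    (hκ_def : κ = m * L * H * ε + m * L * √(H * ε)) (hκ : 0 < κ) :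
    robustLoss m H L (√κ / 2) κ ε ≤ 6 * √κ + 2 * κ := by
  have hmin : L * min ε (m * H) ≤ κ := by
    have := mul_le_mul_of_nonneg_left
      (min_le_mul_sqrt (m := (m : ℝ)) (Nat.one_le_cast.2 hm) hH hε) hL
    nlinarith [mul_nonneg (mul_nonneg (mul_nonneg (Nat.cast_nonneg m) hL) hH) hε]
  have hlin : m * L * H * ε ≤ κ := by
    rw [hκ_def]
    nlinarith [mul_nonneg (mul_nonneg (Nat.cast_nonneg m) hL) (Real.sqrt_nonneg (H * ε))]
  have hs := Real.sqrt_pos.2 hκ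
  have hss := Real.mul_self_sqrt hκ.le
  have hdiv : (2 * L * min ε (m * H) + κ) / (√κ / 2) ≤ 6 * √κ := by
    rw [div_le_iff₀ (by positivity)]; nlinarith
  rw [robustLoss]; linarith

end OneBidder

open OneBidder in
/-- single-bidder approximation-preserving Prokhorov robustness: there
are absolute constants `C₁`, `C₂` such that from any IC and IR single-bidder mechanism `M`
achieving a `c`-approximation to `OPT(D)`, one can construct an IC and IR mechanism `M̂`
(from `M` and `D` alone) such that for every distribution `D̂` on `[0,H]^m` with
`‖D − D̂‖_P ≤ ε`: `Rev(M̂, D̂) ≥ c·(1 − √κ)·OPT(D̂) − C₂·(κ + (√(mLH) + 1)·√κ)`, where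
`κ = C₁·(mLHε + mL√(Hε))`. -/
theorem stmt16 :
    ∃ C₁ C₂ : ℝ, 0 < C₁ ∧ 0 < C₂ ∧
      ∀ (m : ℕ) (H L ε c : ℝ), 0 < H → 0 < L → 0 < ε → 0 < c → c ≤ 1 →
      ∀ v : (Fin m → ℝ) → (Fin m → Bool) → ℝ,
        (∀ t x, (∀ j, t j ∈ Icc (0:ℝ) H) → 0 ≤ v t x) →
        (∀ t x, (∀ j, t j ∈ Icc (0:ℝ) H) → v t x ≤ m * L * H) →
        (∀ t t' x, |v t x - v t' x| ≤ L * ∑ j, |t j - t' j|) →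
      ∀ D : Measure (Fin m → ℝ), IsProbabilityMeasure D → suppBox H D →
      ∀ M : Mech m, IsIC H v M → IsIR H v M → c * OPT H v D ≤ Rev M D →
      ∃ Mhat : Mech m, IsIC H v Mhat ∧ IsIR H v Mhat ∧
        ∀ Dhat : Measure (Fin m → ℝ),
          IsProbabilityMeasure Dhat → suppBox H Dhat → ProkhorovLe D Dhat ε →
          c * (1 - Real.sqrt (C₁ * (m * L * H * ε + m * L * Real.sqrt (H * ε)))) *
              OPT H v Dhat -
            C₂ * (C₁ * (m * L * H * ε + m * L * Real.sqrt (H * ε)) +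
              (Real.sqrt (m * L * H) + 1) *
                Real.sqrt (C₁ * (m * L * H * ε + m * L * Real.sqrt (H * ε)))) ≤
          Rev Mhat Dhat := by
  refine ⟨1, 12, one_pos, by norm_num, ?_⟩
  intro m H L ε c hH hL hε hc hc1 v hv0 hv1 hlip D hD hDbox M hMIC hMIR hMrev
  simp only [one_mul]
  set κ := (m : ℝ) * L * H * ε + m * L * √(H * ε) with hκ_def
  have hK : (0 : ℝ) ≤ m * L * H := by positivity
  by_cases htriv : m = 0 ∨ 1 ≤ √κ
  · refine ⟨Mech.null m, Mech.null_isIC, Mech.null_isIR hv0, fun Dhat _ hDhat _ => ?_⟩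
    have hOPT := OPT_le hDhat hv0 hv1 hK
    have hOPT0 := OPT_nonneg hDhat hv0 hv1 hK
    rw [Mech.rev_null]
    rcases htriv with rfl | hκ1
    · simp only [κ, CharP.cast_eq_zero, zero_mul, zero_add, Real.sqrt_zero] at hOPT ⊢
      nlinarith
    · have : 0 ≤ κ + (√(m * L * H) + 1) * √κ := by positivity
      nlinarith [mul_nonneg hc.le hOPT0]
  obtain ⟨hm, hκ1⟩ := not_or.1 htriv
  have hκ : 0 < κ := by
    have : (0 : ℝ) < m := by positivity
    positivity
  obtain ⟨Mhat, hIC, hIR, hMhat⟩ := exists_robust_approx_mech hH.le hL.le hv0 hv1 hlip hDbox hMIC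
    hMIR hc.le hc1 hMrev (half_pos (Real.sqrt_pos.2 hκ)) (by linarith [not_le.1 hκ1]) hκ hε.le
  refine ⟨Mhat, hIC, hIR, fun Dhat _ hDhat hprok => ?_⟩
  have hrev := hMhat Dhat hDhat hprok
  have hloss := robustLoss_le (Nat.one_le_iff_ne_zero.2 hm) hH.le hL.le hε.le hκ_def hκ
  rw [mul_div_cancel₀ _ two_ne_zero] at hrev
  nlinarith [Real.sqrt_nonneg (m * L * H), Real.sqrt_nonneg κ]
end
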